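/- arXiv:2207.11220 — 4 statements merged into one kernel-verified Lean document; each statement's English description precedes it below -/
import Mathlib

section
/- Define the doubling iteration with dependently-sized matrices: s_k = r^{2^k}, A₀ = A, G₀ = BBᵀ, H₀ = CᵀC, and for k ≥ 0 (identifying ℝ^{s_k·s_k·n} with ℝ^{s_{k+1}n}): A_{k+1} = (A_k ⊗ I_{s_k})(I_{s_k n} + G_k(H_k ⊗ I_{s_k}))⁻¹A_k ∈ ℝ^{s_{k+1}n×n}, G_{k+1} = G_k ⊗ I_{s_k} + (A_k ⊗ I_{s_k})(I_{s_k n} + G_k(H_k ⊗ I_{s_k}))⁻¹G_k(A_kᵀ ⊗ I_{s_k}) ∈ ℝ^{s_{k+1}n×s_{k+1}n}, H_{k+1} = H_k + A_kᵀ(H_k ⊗ I_{s_k})(I_{s_k n} + G_k(H_k ⊗ I_{s_k}))⁻¹A_k ∈ ℝ^{n×n}. Then for every k ≥ 0, the matrix I_{s_k n} + G_k(H_k ⊗ I_{s_k}) is invertible and H_k = X_{2^k}, the 2^k-th iterate of the fixed point iteration. Consequently {H_k} is monotonically nondecreasing, and if the SDARE has a symmetric positive semidefinite solution, H_k converges to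 the minimal symmetric positive semidefinite solution (the doubling iteration computes exactly the 2^k-th fixed point iterates). -/
open Matrix
open scoped Kronecker

set_option linter.unusedSectionVars false
set_option linter.unusedVariables false
set_option maxHeartbeats 1000000000

namespace SDA

variable {a b c p q s ν : Type*} [Fintype p] [DecidableEq p] [Fintype q] [DecidableEq q]
  [Fintype s] [DecidableEq s] [Fintype ν] [DecidableEq ν]

variable {p q s ν : Type*} [Fintype p] [DecidableEq p] [Fintype q] [DecidableEq q]
  [Fintype s] [DecidableEq s] [Fintype ν] [DecidableEq ν]

lemma real_isHermitian {M : Matrix p p ℝ} (h : Mᵀ = M) : M.IsHermitian := by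
  rw [Matrix.IsHermitian, conjTranspose_eq_transpose_of_trivial, h]

lemma real_transpose_eq {M : Matrix p p ℝ} (h : M.IsHermitian) : Mᵀ = M := by
  rw [← conjTranspose_eq_transpose_of_trivial]; exact h

lemma psd_exists_conjTranspose_mul {P : Matrix p p ℝ} (hP : P.PosSemidef) :
    ∃ B : Matrix p p ℝ, P = Bᴴ * B := by
  open scoped MatrixOrder in
  obtain ⟨B, hB⟩ := CStarAlgebra.nonneg_iff_eq_star_mul_self.mp hP.nonneg
  exact ⟨B, hB⟩

lemma psd_quad_nonneg {P : Matrix p p ℝ} (hP : P.PosSemidef) (x : p → ℝ) :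
    0 ≤ x ⬝ᵥ (P *ᵥ x) := by
  simpa using hP.dotProduct_mulVec_nonneg x

lemma psd_mulVec_eq_zero {P : Matrix p p ℝ} (hP : P.PosSemidef) {x : p → ℝ}
    (h : x ⬝ᵥ (P *ᵥ x) = 0) : P *ᵥ x = 0 := by
  obtain ⟨B, hB⟩ := psd_exists_conjTranspose_mul hP
  have hBt : Bᴴ = Bᵀ := conjTranspose_eq_transpose_of_trivial B
  rw [hB, hBt] at h ⊢
  have hx : (B *ᵥ x) ⬝ᵥ (B *ᵥ x) = 0 := by
    have : x ⬝ᵥ ((Bᵀ * B) *ᵥ x) = (B *ᵥ x) ⬝ᵥ (B *ᵥ x) := by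
      rw [← mulVec_mulVec, dotProduct_mulVec, vecMul_transpose]
    rw [← this, h]
  have hBx : B *ᵥ x = 0 := dotProduct_self_eq_zero.mp hx
  rw [← mulVec_mulVec, hBx, mulVec_zero]

lemma isUnit_one_add_psd_mul {P Q : Matrix p p ℝ} (hP : P.PosSemidef) (hQ : Q.PosSemidef) :
    IsUnit (1 + P * Q) := by
  rw [Matrix.isUnit_iff_isUnit_det, isUnit_iff_ne_zero]
  intro hdet
  obtain ⟨v, hv, hmv⟩ := (Matrix.exists_mulVec_eq_zero_iff).mpr hdet
  have hv' : v + P *ᵥ (Q *ᵥ v) = 0 := by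
    rwa [add_mulVec, one_mulVec, ← mulVec_mulVec] at hmv
  have hveq : v = -(P *ᵥ (Q *ᵥ v)) := eq_neg_of_add_eq_zero_left hv'
  set y := Q *ᵥ v with hy
  have h1 : 0 ≤ v ⬝ᵥ y := psd_quad_nonneg hQ v
  have h2 : v ⬝ᵥ y = -(y ⬝ᵥ (P *ᵥ y)) := by
    rw [hveq, neg_dotProduct, dotProduct_comm]
  have h3 : 0 ≤ y ⬝ᵥ (P *ᵥ y) := psd_quad_nonneg hP y
  have h4 : v ⬝ᵥ y = 0 := le_antisymm (by rw [h2]; linarith) h1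
  have hy0 : y = 0 := by
    have := psd_mulVec_eq_zero hQ (x := v) (by rw [← hy]; exact h4)
    rwa [← hy] at this
  apply hv
  rw [hveq, hy0, mulVec_zero, neg_zero]

/-- push-through identity -/
lemma push_through {P Q : Matrix p p ℝ} (h1 : IsUnit (1 + P * Q)) (h2 : IsUnit (1 + Q * P)) :
    P * (1 + Q * P)⁻¹ = (1 + P * Q)⁻¹ * P := by
  have h1d : IsUnit (1 + P * Q).det := (Matrix.isUnit_iff_isUnit_det _).mp h1
  have h2d : IsUnit (1 + Q * P).det := (Matrix.isUnit_iff_isUnit_det _).mp h2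
  have key : (1 + P * Q) * P = P * (1 + Q * P) := by noncomm_ring
  calc P * (1 + Q * P)⁻¹ = (1 + P * Q)⁻¹ * ((1 + P * Q) * P) * (1 + Q * P)⁻¹ := by
        rw [← mul_assoc, Matrix.nonsing_inv_mul _ h1d, one_mul]
    _ = (1 + P * Q)⁻¹ * P * ((1 + Q * P) * (1 + Q * P)⁻¹) := by
        rw [key]; noncomm_ring
    _ = (1 + P * Q)⁻¹ * P := by rw [Matrix.mul_nonsing_inv _ h2d, mul_one]

/-- `G (1 + X G)⁻¹` is PSD for `G, X` PSD. -/
lemma psd_mul_inv_one_add {G X : Matrix p p ℝ} (hG : G.PosSemidef) (hX : X.PosSemidef) :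
    (G * (1 + X * G)⁻¹).PosSemidef := by
  have hu1 : IsUnit (1 + X * G) := isUnit_one_add_psd_mul hX hG
  have hu2 : IsUnit (1 + G * X) := isUnit_one_add_psd_mul hG hX
  have hu1d := (Matrix.isUnit_iff_isUnit_det _).mp hu1
  refine Matrix.PosSemidef.of_dotProduct_mulVec_nonneg ?_ ?_
  · apply real_isHermitian
    have hpt : G * (1 + X * G)⁻¹ = (1 + G * X)⁻¹ * G := push_through hu2 hu1
    rw [transpose_mul, transpose_nonsing_inv, transpose_add, transpose_one, transpose_mul,
      real_transpose_eq hG.isHermitian, real_transpose_eq hX.isHermitian, hpt]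
  · intro z
    set w := (1 + X * G)⁻¹ *ᵥ (star z) with hw
    have hz : star z = w + X *ᵥ (G *ᵥ w) := by
      have : (1 + X * G) *ᵥ w = star z := by
        rw [hw, mulVec_mulVec, Matrix.mul_nonsing_inv _ hu1d, one_mulVec]
      rw [← this, add_mulVec, one_mulVec, ← mulVec_mulVec]
    have hform : star z ⬝ᵥ ((G * (1 + X * G)⁻¹) *ᵥ z) =
        w ⬝ᵥ (G *ᵥ w) + (G *ᵥ w) ⬝ᵥ (X *ᵥ (G *ᵥ w)) := by
      have hsz : star z = z := by simp
      calc star z ⬝ᵥ ((G * (1 + X * G)⁻¹) *ᵥ z) = star z ⬝ᵥ (G *ᵥ w) := by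
            rw [← mulVec_mulVec, hw, hsz]
        _ = (w + X *ᵥ (G *ᵥ w)) ⬝ᵥ (G *ᵥ w) := by rw [← hz]
        _ = w ⬝ᵥ (G *ᵥ w) + (X *ᵥ (G *ᵥ w)) ⬝ᵥ (G *ᵥ w) := by rw [add_dotProduct]
        _ = w ⬝ᵥ (G *ᵥ w) + (G *ᵥ w) ⬝ᵥ (X *ᵥ (G *ᵥ w)) := by rw [dotProduct_comm (X *ᵥ (G *ᵥ w))]
    rw [hform]
    have := psd_quad_nonneg hG w
    have := psd_quad_nonneg hX (G *ᵥ w)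
    positivity

/-- Kronecker with the identity preserves PSD. -/
lemma psd_kron_one {P : Matrix p p ℝ} (hP : P.PosSemidef) :
    (P ⊗ₖ (1 : Matrix q q ℝ)).PosSemidef := by
  obtain ⟨B, hB⟩ := psd_exists_conjTranspose_mul hP
  have : P ⊗ₖ (1 : Matrix q q ℝ) = (B ⊗ₖ (1 : Matrix q q ℝ))ᴴ * (B ⊗ₖ (1 : Matrix q q ℝ)) := by
    rw [conjTranspose_eq_transpose_of_trivial, ← kroneckerMap_transpose, transpose_one,
      ← Matrix.mul_kronecker_mul, Matrix.one_mul, hB, conjTranspose_eq_transpose_of_trivial]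
  rw [this]
  exact Matrix.posSemidef_conjTranspose_mul_self _
lemma kron_mul_one (P : Matrix a b ℝ) (Q : Matrix b c ℝ) [Fintype b] :
    (P * Q) ⊗ₖ (1 : Matrix s s ℝ) = (P ⊗ₖ (1 : Matrix s s ℝ)) * (Q ⊗ₖ (1 : Matrix s s ℝ)) := by
  rw [← Matrix.mul_kronecker_mul, Matrix.one_mul]

lemma kron_transpose_one (P : Matrix a b ℝ) :
    Pᵀ ⊗ₖ (1 : Matrix s s ℝ) = (P ⊗ₖ (1 : Matrix s s ℝ))ᵀ := by
  have h := Matrix.kroneckerMap_transpose (fun x1 x2 => x1 * x2) P (1 : Matrix s s ℝ)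
  rwa [transpose_one] at h

lemma kron_sub_one (P Q : Matrix a b ℝ) :
    (P - Q) ⊗ₖ (1 : Matrix s s ℝ) = P ⊗ₖ (1 : Matrix s s ℝ) - Q ⊗ₖ (1 : Matrix s s ℝ) := by
  ext ⟨i, j⟩ ⟨k, l⟩
  simp [Matrix.kroneckerMap_apply, sub_mul]

lemma kron_add_one (P Q : Matrix a b ℝ) :
    (P + Q) ⊗ₖ (1 : Matrix s s ℝ) = P ⊗ₖ (1 : Matrix s s ℝ) + Q ⊗ₖ (1 : Matrix s s ℝ) :=
  Matrix.add_kronecker P Q 1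

/-- the abstract Riccati-type map at one level -/
noncomputable def fop (A : Matrix (ν × s) ν ℝ) (G : Matrix (ν × s) (ν × s) ℝ)
    (H : Matrix ν ν ℝ) (X : Matrix ν ν ℝ) : Matrix ν ν ℝ :=
  H + Aᵀ * (X ⊗ₖ (1 : Matrix s s ℝ)) * (1 + G * (X ⊗ₖ (1 : Matrix s s ℝ)))⁻¹ * A

lemma fop_psd {A : Matrix (ν × s) ν ℝ} {G : Matrix (ν × s) (ν × s) ℝ}
    {H : Matrix ν ν ℝ} {X : Matrix ν ν ℝ} (hG : G.PosSemidef) (hH : H.PosSemidef)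
    (hX : X.PosSemidef) : (fop A G H X).PosSemidef := by
  have hS : ((X ⊗ₖ (1 : Matrix s s ℝ)) * (1 + G * (X ⊗ₖ (1 : Matrix s s ℝ)))⁻¹).PosSemidef :=
    psd_mul_inv_one_add (psd_kron_one hX) hG
  have h2 : (Aᴴ * ((X ⊗ₖ (1 : Matrix s s ℝ)) * (1 + G * (X ⊗ₖ (1 : Matrix s s ℝ)))⁻¹) * A).PosSemidef :=
    hS.conjTranspose_mul_mul_same A
  rw [fop]
  have : Aᵀ * (X ⊗ₖ (1 : Matrix s s ℝ)) * (1 + G * (X ⊗ₖ (1 : Matrix s s ℝ)))⁻¹ * A =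
      Aᴴ * ((X ⊗ₖ (1 : Matrix s s ℝ)) * (1 + G * (X ⊗ₖ (1 : Matrix s s ℝ)))⁻¹) * A := by
    rw [conjTranspose_eq_transpose_of_trivial, Matrix.mul_assoc Aᵀ]
  rw [this]
  exact hH.add h2


section Core
variable {n1 n2 n3 : Type*} [Fintype n1] [DecidableEq n1] [Fintype n2] [DecidableEq n2]
  [Fintype n3] [DecidableEq n3]
/-- Core SDA doubling algebra, abstracted from Kronecker structure. -/
theorem doubling_algebra
    (A U V : Matrix n2 n1 ℝ) (G N X1 H1 Y1 : Matrix n2 n2 ℝ)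
    (LA LU : Matrix n3 n2 ℝ) (LAT : Matrix n2 n3 ℝ) (LG X2 : Matrix n3 n3 ℝ)
    (hGt : Gᵀ = G) (hH1t : H1ᵀ = H1)
    (uH : IsUnit (1 + G * H1)) (uY : IsUnit (1 + G * Y1))
    (uW : IsUnit (1 + (LG + LA * N * G * LAT) * X2))
    (hN : N = (1 + G * H1)⁻¹)
    (hV : V = (1 + G * Y1)⁻¹ * A)
    (hAU : A = (1 + G * X1) * U)
    (hY1 : Y1 = H1 + LAT * X2 * LU)
    (hLA : LU + LG * (X2 * LU) = LA)
    (hLAT : LAT = LAᵀ) :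
    Aᵀ * H1 * N * A + (LA * N * A)ᵀ * X2 * (1 + (LG + LA * N * G * LAT) * X2)⁻¹ * (LA * N * A)
      = Aᵀ * Y1 * (1 + G * Y1)⁻¹ * A := by
  have uHd : IsUnit (1 + G * H1).det := (Matrix.isUnit_iff_isUnit_det _).mp uH
  have uYd : IsUnit (1 + G * Y1).det := (Matrix.isUnit_iff_isUnit_det _).mp uY
  have uWd : IsUnit (1 + (LG + LA * N * G * LAT) * X2).det :=
    (Matrix.isUnit_iff_isUnit_det _).mp uW
  have hNinv : (1 + G * H1) * N = 1 := by rw [hN]; exact Matrix.mul_nonsing_inv _ uHd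
  have hNinv' : N * (1 + G * H1) = 1 := by rw [hN]; exact Matrix.nonsing_inv_mul _ uHd
  set Δ : Matrix n2 n2 ℝ := LAT * X2 * LU with hΔdef
  set T : Matrix n2 n2 ℝ := 1 + N * G * Δ with hTdef
  -- factorization
  have factor : (1 + G * H1) * T = 1 + G * Y1 := by
    have e1 : (1 + G * H1) * T = 1 + G * H1 + ((1 + G * H1) * N) * (G * Δ) := by
      rw [hTdef]; noncomm_ring
    rw [e1, hNinv, one_mul, hY1]; noncomm_ring
  have uTd : IsUnit T.det := by
    have e : (1 + G * H1).det * T.det = (1 + G * Y1).det := by rw [← Matrix.det_mul, factor]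
    exact isUnit_of_mul_isUnit_right (e ▸ uYd)
  -- key identity for V
  have keyV : T * V = N * A := by
    have e1 : (1 + G * H1) * (T * V) = A := by
      rw [← Matrix.mul_assoc, factor, hV, ← Matrix.mul_assoc,
        Matrix.mul_nonsing_inv _ uYd, Matrix.one_mul]
    calc T * V = (N * (1 + G * H1)) * (T * V) := by rw [hNinv', Matrix.one_mul]
      _ = N * ((1 + G * H1) * (T * V)) := by rw [Matrix.mul_assoc]
      _ = N * A := by rw [e1]
  have hNA : N * A = V + N * G * Δ * V := by
    rw [← keyV, hTdef]
    simp only [Matrix.add_mul, Matrix.one_mul, Matrix.mul_assoc]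
  -- transpose of N
  have hNt : Nᵀ = 1 - H1 * N * G := by
    have e0 : Nᵀ = (1 + H1 * G)⁻¹ := by
      rw [hN, Matrix.transpose_nonsing_inv, transpose_add, transpose_one, transpose_mul, hGt, hH1t]
    have e1 : (1 + H1 * G) * (1 - H1 * N * G) = 1 := by
      have e2 : (1 + H1 * G) * (1 - H1 * N * G) =
          1 + H1 * G - H1 * (((1 + G * H1) * N) * G) := by noncomm_ring
      rw [e2, hNinv, one_mul]; noncomm_ring
    rw [e0, Matrix.inv_eq_right_inv e1]
  -- the doubled pencil relation
  have claim1 : (1 + (LG + LA * N * G * LAT) * X2) * (LU * V) = LA * (N * A) := by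
    have e1 : (1 + (LG + LA * N * G * LAT) * X2) * (LU * V) =
        (LU + LG * (X2 * LU)) * V + LA * (N * (G * (Δ * V))) := by
      rw [hΔdef]
      simp only [Matrix.mul_assoc, Matrix.add_mul, Matrix.mul_add, Matrix.one_mul]
      abel
    rw [e1, hLA, hNA]
    simp only [Matrix.mul_assoc, Matrix.mul_add]
  have hW : LU * V = (1 + (LG + LA * N * G * LAT) * X2)⁻¹ * (LA * (N * A)) := by
    rw [← claim1, ← Matrix.mul_assoc, Matrix.nonsing_inv_mul _ uWd, Matrix.one_mul]
  -- second term evaluation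
  have ht : (LA * N * A)ᵀ * X2 * (1 + (LG + LA * N * G * LAT) * X2)⁻¹ * (LA * N * A)
      = Aᵀ * (Nᵀ * (Δ * V)) := by
    calc (LA * N * A)ᵀ * X2 * (1 + (LG + LA * N * G * LAT) * X2)⁻¹ * (LA * N * A)
        = (LA * N * A)ᵀ * (X2 * ((1 + (LG + LA * N * G * LAT) * X2)⁻¹ * (LA * (N * A)))) := by
          simp only [Matrix.mul_assoc]
      _ = (LA * N * A)ᵀ * (X2 * (LU * V)) := by rw [← hW]
      _ = Aᵀ * (Nᵀ * (LAᵀ * (X2 * (LU * V)))) := by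
          rw [Matrix.transpose_mul, Matrix.transpose_mul]
          simp only [Matrix.mul_assoc]
      _ = Aᵀ * (Nᵀ * (Δ * V)) := by
          rw [← hLAT, hΔdef]
          simp only [Matrix.mul_assoc]
  rw [ht]
  -- final computation
  have hNtΔV : Nᵀ * (Δ * V) = Δ * V - H1 * (N * (G * (Δ * V))) := by
    rw [hNt]
    simp only [Matrix.sub_mul, Matrix.one_mul, Matrix.mul_assoc]
  have hH1NA : Aᵀ * H1 * N * A = Aᵀ * (H1 * V) + Aᵀ * (H1 * (N * (G * (Δ * V)))) := by
    calc Aᵀ * H1 * N * A = Aᵀ * (H1 * (N * A)) := by simp only [Matrix.mul_assoc]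
      _ = Aᵀ * (H1 * (V + N * G * Δ * V)) := by rw [hNA]
      _ = Aᵀ * (H1 * V) + Aᵀ * (H1 * (N * (G * (Δ * V)))) := by
          simp only [Matrix.mul_add, Matrix.mul_assoc]
  rw [hH1NA, hNtΔV]
  have hRHS : Aᵀ * Y1 * (1 + G * Y1)⁻¹ * A = Aᵀ * (H1 * V) + Aᵀ * (Δ * V) := by
    calc Aᵀ * Y1 * (1 + G * Y1)⁻¹ * A = Aᵀ * (Y1 * ((1 + G * Y1)⁻¹ * A)) := by
          simp only [Matrix.mul_assoc]
      _ = Aᵀ * ((H1 + Δ) * V) := by rw [← hV, ← hY1]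
      _ = Aᵀ * (H1 * V) + Aᵀ * (Δ * V) := by simp only [Matrix.add_mul, Matrix.mul_add]
  rw [hRHS]
  simp only [Matrix.mul_sub, Matrix.mul_add]
  abel


end Core
noncomputable def dN (G : Matrix (ν × s) (ν × s) ℝ) (H : Matrix ν ν ℝ) :
    Matrix (ν × s) (ν × s) ℝ :=
  (1 + G * (H ⊗ₖ (1 : Matrix s s ℝ)))⁻¹

noncomputable def dA (A : Matrix (ν × s) ν ℝ) (G : Matrix (ν × s) (ν × s) ℝ)
    (H : Matrix ν ν ℝ) : Matrix ((ν × s) × s) ν ℝ :=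
  (A ⊗ₖ (1 : Matrix s s ℝ)) * dN G H * A

noncomputable def dG (A : Matrix (ν × s) ν ℝ) (G : Matrix (ν × s) (ν × s) ℝ)
    (H : Matrix ν ν ℝ) : Matrix ((ν × s) × s) ((ν × s) × s) ℝ :=
  G ⊗ₖ (1 : Matrix s s ℝ) +
    (A ⊗ₖ (1 : Matrix s s ℝ)) * dN G H * G * (Aᵀ ⊗ₖ (1 : Matrix s s ℝ))

theorem dG_psd (A : Matrix (ν × s) ν ℝ) {G : Matrix (ν × s) (ν × s) ℝ}
    {H : Matrix ν ν ℝ} (hG : G.PosSemidef) (hH : H.PosSemidef) : (dG A G H).PosSemidef := by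
  have hH1 : ((H ⊗ₖ (1 : Matrix s s ℝ))).PosSemidef := psd_kron_one hH
  have uH : IsUnit (1 + G * (H ⊗ₖ (1 : Matrix s s ℝ))) := isUnit_one_add_psd_mul hG hH1
  have uH' : IsUnit (1 + (H ⊗ₖ (1 : Matrix s s ℝ)) * G) := isUnit_one_add_psd_mul hH1 hG
  have hNG : (dN G H * G).PosSemidef := by
    have hpt : G * (1 + (H ⊗ₖ (1 : Matrix s s ℝ)) * G)⁻¹ = dN (s := s) G H * G := by
      rw [dN]; exact push_through uH uH'
    rw [← hpt]
    exact psd_mul_inv_one_add hG hH1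
  have h2 : ((A ⊗ₖ (1 : Matrix s s ℝ)) * (dN G H * G) *
      (A ⊗ₖ (1 : Matrix s s ℝ))ᴴ).PosSemidef := hNG.mul_mul_conjTranspose_same _
  have e : (A ⊗ₖ (1 : Matrix s s ℝ)) * dN G H * G * (Aᵀ ⊗ₖ (1 : Matrix s s ℝ)) =
      (A ⊗ₖ (1 : Matrix s s ℝ)) * (dN G H * G) * (A ⊗ₖ (1 : Matrix s s ℝ))ᴴ := by
    rw [conjTranspose_eq_transpose_of_trivial, ← kron_transpose_one]
    simp only [Matrix.mul_assoc]
  rw [dG, e]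
  exact (psd_kron_one hG).add h2

theorem doubling (A : Matrix (ν × s) ν ℝ) (G : Matrix (ν × s) (ν × s) ℝ)
    (H X : Matrix ν ν ℝ) (hG : G.PosSemidef) (hH : H.PosSemidef) (hX : X.PosSemidef) :
    IsUnit (1 + dG A G H * ((X ⊗ₖ (1 : Matrix s s ℝ)) ⊗ₖ (1 : Matrix s s ℝ))) ∧
    fop A G H H + (dA A G H)ᵀ * ((X ⊗ₖ (1 : Matrix s s ℝ)) ⊗ₖ (1 : Matrix s s ℝ)) *
        (1 + dG A G H * ((X ⊗ₖ (1 : Matrix s s ℝ)) ⊗ₖ (1 : Matrix s s ℝ)))⁻¹ * dA A G H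
      = fop A G H (fop A G H X) := by
  have hX1 : ((X ⊗ₖ (1 : Matrix s s ℝ))).PosSemidef := psd_kron_one hX
  have hH1 : ((H ⊗ₖ (1 : Matrix s s ℝ))).PosSemidef := psd_kron_one hH
  have hX2 : (((X ⊗ₖ (1 : Matrix s s ℝ)) ⊗ₖ (1 : Matrix s s ℝ))).PosSemidef :=
    psd_kron_one hX1
  have hY : (fop A G H X).PosSemidef := fop_psd hG hH hX
  have hY1 : ((fop A G H X ⊗ₖ (1 : Matrix s s ℝ))).PosSemidef := psd_kron_one hY
  have uX : IsUnit (1 + G * (X ⊗ₖ (1 : Matrix s s ℝ))) := isUnit_one_add_psd_mul hG hX1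
  have uXd := (Matrix.isUnit_iff_isUnit_det _).mp uX
  have uH : IsUnit (1 + G * (H ⊗ₖ (1 : Matrix s s ℝ))) := isUnit_one_add_psd_mul hG hH1
  have uY : IsUnit (1 + G * (fop A G H X ⊗ₖ (1 : Matrix s s ℝ))) :=
    isUnit_one_add_psd_mul hG hY1
  have uW : IsUnit (1 + dG A G H * ((X ⊗ₖ (1 : Matrix s s ℝ)) ⊗ₖ (1 : Matrix s s ℝ))) :=
    isUnit_one_add_psd_mul (dG_psd A hG hH) hX2
  refine ⟨uW, ?_⟩
  have uXd2 := uXd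
  have halg := doubling_algebra (n1 := ν) (n2 := ν × s) (n3 := (ν × s) × s)
    A ((1 + G * (X ⊗ₖ (1 : Matrix s s ℝ)))⁻¹ * A)
    ((1 + G * (fop A G H X ⊗ₖ (1 : Matrix s s ℝ)))⁻¹ * A)
    G ((1 + G * (H ⊗ₖ (1 : Matrix s s ℝ)))⁻¹) (X ⊗ₖ (1 : Matrix s s ℝ))
    (H ⊗ₖ (1 : Matrix s s ℝ))
    (fop A G H X ⊗ₖ (1 : Matrix s s ℝ))
    (A ⊗ₖ (1 : Matrix s s ℝ))
    (((1 + G * (X ⊗ₖ (1 : Matrix s s ℝ)))⁻¹ * A) ⊗ₖ (1 : Matrix s s ℝ))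
    (Aᵀ ⊗ₖ (1 : Matrix s s ℝ))
    (G ⊗ₖ (1 : Matrix s s ℝ)) ((X ⊗ₖ (1 : Matrix s s ℝ)) ⊗ₖ (1 : Matrix s s ℝ))
    (real_transpose_eq hG.isHermitian) (real_transpose_eq hH1.isHermitian)
    uH uY (by simpa only [dG, dN] using uW) rfl rfl
    (by rw [← Matrix.mul_assoc, Matrix.mul_nonsing_inv _ uXd, Matrix.one_mul])
    ?hY1eq ?hLAeq (kron_transpose_one A)
  case hY1eq =>
    have e1 : fop A G H X = H + Aᵀ * (X ⊗ₖ (1 : Matrix s s ℝ)) *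
        ((1 + G * (X ⊗ₖ (1 : Matrix s s ℝ)))⁻¹ * A) := by
      rw [fop, Matrix.mul_assoc]
    rw [e1, kron_add_one]
    congr 1
    rw [kron_mul_one (Aᵀ * (X ⊗ₖ (1 : Matrix s s ℝ))), kron_mul_one Aᵀ]
  case hLAeq =>
    rw [← kron_mul_one ((X ⊗ₖ (1 : Matrix s s ℝ))), ← kron_mul_one G, ← kron_add_one]
    refine congrArg (fun M => M ⊗ₖ (1 : Matrix s s ℝ)) ?_
    calc (1 + G * (X ⊗ₖ (1 : Matrix s s ℝ)))⁻¹ * A +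
          G * ((X ⊗ₖ (1 : Matrix s s ℝ)) * ((1 + G * (X ⊗ₖ (1 : Matrix s s ℝ)))⁻¹ * A))
        = (1 + G * (X ⊗ₖ (1 : Matrix s s ℝ))) * ((1 + G * (X ⊗ₖ (1 : Matrix s s ℝ)))⁻¹ * A) := by
          simp only [Matrix.add_mul, Matrix.one_mul, Matrix.mul_assoc]
      _ = A := by rw [← Matrix.mul_assoc, Matrix.mul_nonsing_inv _ uXd, Matrix.one_mul]
  conv_lhs => rw [fop]
  conv_rhs => rw [fop]
  simp only [dA, dG, dN]
  rw [add_assoc]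
  exact congrArg (fun M => H + M) halg

lemma one_add_submatrix {a b : Type*} [Fintype a] [DecidableEq a] [Fintype b] [DecidableEq b]
    (M : Matrix b b ℝ) (e : a ≃ b) :
    1 + M.submatrix e e = (1 + M).submatrix e e := by
  ext i j
  simp [Matrix.submatrix_apply, Matrix.one_apply, e.injective.eq_iff]

lemma kron_reassoc (X : Matrix ν ν ℝ) :
    X ⊗ₖ (1 : Matrix (s × s) (s × s) ℝ) =
      ((X ⊗ₖ (1 : Matrix s s ℝ)) ⊗ₖ (1 : Matrix s s ℝ)).submatrix
        (Equiv.prodAssoc ν s s).symm (Equiv.prodAssoc ν s s).symm := by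
  rw [← Matrix.one_kronecker_one (m := s) (n := s), ← Matrix.kronecker_assoc']

lemma bridge_expr (A' : Matrix ((ν × s) × s) ν ℝ) (G' : Matrix ((ν × s) × s) ((ν × s) × s) ℝ)
    (X : Matrix ν ν ℝ) :
    (A'.submatrix (Equiv.prodAssoc ν s s).symm id)ᵀ * (X ⊗ₖ (1 : Matrix (s × s) (s × s) ℝ)) *
        (1 + G'.submatrix (Equiv.prodAssoc ν s s).symm (Equiv.prodAssoc ν s s).symm *
          (X ⊗ₖ (1 : Matrix (s × s) (s × s) ℝ)))⁻¹ *
        (A'.submatrix (Equiv.prodAssoc ν s s).symm id)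
      = A'ᵀ * ((X ⊗ₖ (1 : Matrix s s ℝ)) ⊗ₖ (1 : Matrix s s ℝ)) *
        (1 + G' * ((X ⊗ₖ (1 : Matrix s s ℝ)) ⊗ₖ (1 : Matrix s s ℝ)))⁻¹ * A' := by
  set e := (Equiv.prodAssoc ν s s).symm
  set X2 := (X ⊗ₖ (1 : Matrix s s ℝ)) ⊗ₖ (1 : Matrix s s ℝ) with hX2
  have h1 : X ⊗ₖ (1 : Matrix (s × s) (s × s) ℝ) = X2.submatrix e e := kron_reassoc X
  have h2 : (1 + G'.submatrix e e * X2.submatrix e e) = (1 + G' * X2).submatrix e e := by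
    rw [Matrix.submatrix_mul_equiv, one_add_submatrix]
  rw [h1, transpose_submatrix, h2, Matrix.inv_submatrix_equiv]
  calc (A'ᵀ.submatrix id ⇑e * X2.submatrix ⇑e ⇑e) * ((1 + G' * X2)⁻¹.submatrix ⇑e ⇑e) *
        A'.submatrix ⇑e id
      = ((A'ᵀ * X2).submatrix id ⇑e) * ((1 + G' * X2)⁻¹.submatrix ⇑e ⇑e) * A'.submatrix ⇑e id := by
        rw [Matrix.submatrix_mul_equiv]
    _ = ((A'ᵀ * X2 * (1 + G' * X2)⁻¹).submatrix id ⇑e) * A'.submatrix ⇑e id := by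
        rw [Matrix.submatrix_mul_equiv]
    _ = (A'ᵀ * X2 * (1 + G' * X2)⁻¹ * A').submatrix id id := by
        rw [Matrix.submatrix_mul_equiv]
    _ = A'ᵀ * X2 * (1 + G' * X2)⁻¹ * A' := Matrix.submatrix_id_id _

lemma bridge_isUnit (G' : Matrix ((ν × s) × s) ((ν × s) × s) ℝ) (X : Matrix ν ν ℝ)
    (h : IsUnit (1 + G' * ((X ⊗ₖ (1 : Matrix s s ℝ)) ⊗ₖ (1 : Matrix s s ℝ)))) :
    IsUnit (1 + G'.submatrix (Equiv.prodAssoc ν s s).symm (Equiv.prodAssoc ν s s).symm *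
      (X ⊗ₖ (1 : Matrix (s × s) (s × s) ℝ))) := by
  set e := (Equiv.prodAssoc ν s s).symm
  have h1 : X ⊗ₖ (1 : Matrix (s × s) (s × s) ℝ) =
      ((X ⊗ₖ (1 : Matrix s s ℝ)) ⊗ₖ (1 : Matrix s s ℝ)).submatrix e e := kron_reassoc X
  rw [h1, Matrix.submatrix_mul_equiv, one_add_submatrix]
  exact (Matrix.isUnit_submatrix_equiv e e).mpr h

theorem fop_mono (A : Matrix (ν × s) ν ℝ) {G : Matrix (ν × s) (ν × s) ℝ}
    {H X Y : Matrix ν ν ℝ} (hG : G.PosSemidef) (hH : H.PosSemidef)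
    (hX : X.PosSemidef) (hY : Y.PosSemidef) (hXY : (Y - X).PosSemidef) :
    (fop A G H Y - fop A G H X).PosSemidef := by
  set X1 := X ⊗ₖ (1 : Matrix s s ℝ) with hX1def
  set Y1 := Y ⊗ₖ (1 : Matrix s s ℝ) with hY1def
  set Δ := (Y - X) ⊗ₖ (1 : Matrix s s ℝ) with hΔdef
  have hX1p : X1.PosSemidef := psd_kron_one hX
  have hY1p : Y1.PosSemidef := psd_kron_one hY
  have hΔp : Δ.PosSemidef := psd_kron_one hXY
  have hY1d : Y1 = X1 + Δ := by
    rw [hY1def, hX1def, hΔdef, ← kron_add_one, add_sub_cancel]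
  have uX : IsUnit (1 + G * X1) := isUnit_one_add_psd_mul hG hX1p
  have uX' : IsUnit (1 + X1 * G) := isUnit_one_add_psd_mul hX1p hG
  have uY : IsUnit (1 + G * Y1) := isUnit_one_add_psd_mul hG hY1p
  have uXd := (Matrix.isUnit_iff_isUnit_det _).mp uX
  have uX'd := (Matrix.isUnit_iff_isUnit_det _).mp uX'
  have uYd := (Matrix.isUnit_iff_isUnit_det _).mp uY
  set W := (1 + X1 * G)⁻¹ with hWdef
  set M1 := (1 + G * X1)⁻¹ with hM1def
  set M2 := (1 + G * Y1)⁻¹ with hM2def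
  -- the difference identity
  have hid : Y1 * M2 - X1 * M1 = W * Δ * M2 := by
    have e1 : W * ((1 + X1 * G) * (Y1 * M2)) = Y1 * M2 := by
      rw [← Matrix.mul_assoc, hWdef, Matrix.nonsing_inv_mul _ uX'd, Matrix.one_mul]
    have e2 : (W * X1) * ((1 + G * Y1) * M2) = W * X1 := by
      rw [hM2def, Matrix.mul_nonsing_inv _ uYd, Matrix.mul_one]
    have e3 : W * X1 = X1 * M1 := by
      rw [hWdef, hM1def]; exact (push_through uX' uX).symm
    have e4 : W * Δ * M2 = W * ((1 + X1 * G) * (Y1 * M2)) - (W * X1) * ((1 + G * Y1) * M2) := by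
      have e5 : Δ = (1 + X1 * G) * Y1 - X1 * (1 + G * Y1) := by
        have : (1 + X1 * G) * Y1 - X1 * (1 + G * Y1) = Y1 - X1 := by noncomm_ring
        rw [this, hY1d]; abel
      rw [e5]; noncomm_ring
    rw [e4, e1, e2, e3]
  have hdiff : fop A G H Y - fop A G H X = Aᵀ * (W * Δ * M2) * A := by
    rw [fop, fop, ← hid]
    have : Aᵀ * Y1 * M2 * A - Aᵀ * X1 * M1 * A = Aᵀ * (Y1 * M2 - X1 * M1) * A := by
      simp only [Matrix.mul_sub, Matrix.sub_mul, Matrix.mul_assoc]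
    rw [← this]
    abel
  have hermY : (fop A G H Y).PosSemidef := fop_psd hG hH hY
  have hermX : (fop A G H X).PosSemidef := fop_psd hG hH hX
  refine Matrix.PosSemidef.of_dotProduct_mulVec_nonneg ?_ ?_
  · exact hermY.isHermitian.sub hermX.isHermitian
  · intro x
    have hsx : star x = x := by simp
    rw [hsx, hdiff]
    set z := A *ᵥ x with hz
    set b := M2 *ᵥ z with hb
    set c := Δ *ᵥ b with hc
    have hval : x ⬝ᵥ ((Aᵀ * (W * Δ * M2) * A) *ᵥ x) = (M1 *ᵥ z) ⬝ᵥ c := by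
      calc x ⬝ᵥ ((Aᵀ * (W * Δ * M2) * A) *ᵥ x)
          = x ⬝ᵥ (Aᵀ *ᵥ ((W * Δ * M2) *ᵥ (A *ᵥ x))) := by
            simp only [← Matrix.mulVec_mulVec, Matrix.mul_assoc]
        _ = z ⬝ᵥ ((W * Δ * M2) *ᵥ z) := by
            rw [Matrix.dotProduct_mulVec, Matrix.vecMul_transpose, hz]
        _ = z ⬝ᵥ (W *ᵥ c) := by
            rw [hc, hb]
            simp only [← Matrix.mulVec_mulVec, Matrix.mul_assoc]
        _ = (Wᵀ *ᵥ z) ⬝ᵥ c := by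
            rw [Matrix.dotProduct_mulVec, Matrix.mulVec_transpose]
        _ = (M1 *ᵥ z) ⬝ᵥ c := by
            have : Wᵀ = M1 := by
              rw [hWdef, hM1def, Matrix.transpose_nonsing_inv, transpose_add, transpose_one,
                transpose_mul, real_transpose_eq hG.isHermitian,
                real_transpose_eq hX1p.isHermitian]
            rw [this]
    rw [hval]
    have hrel : M1 *ᵥ z = b + (M1 * G) *ᵥ c := by
      have e1 : (1 + G * Y1) *ᵥ b = z := by
        rw [hb, Matrix.mulVec_mulVec, hM2def, Matrix.mul_nonsing_inv _ uYd, Matrix.one_mulVec]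
      calc M1 *ᵥ z = M1 *ᵥ ((1 + G * Y1) *ᵥ b) := by rw [e1]
        _ = M1 *ᵥ ((1 + G * X1) *ᵥ b) + M1 *ᵥ ((G * Δ) *ᵥ b) := by
            rw [hY1d]
            have : (1 + G * (X1 + Δ)) = (1 + G * X1) + G * Δ := by noncomm_ring
            rw [this, Matrix.add_mulVec, Matrix.mulVec_add]
        _ = b + (M1 * G) *ᵥ c := by
            rw [Matrix.mulVec_mulVec, hM1def, Matrix.nonsing_inv_mul _ uXd, Matrix.one_mulVec, hc]
            congr 1
            rw [hb]
            simp only [Matrix.mulVec_mulVec, Matrix.mul_assoc]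
    rw [hrel, add_dotProduct]
    have h1 : 0 ≤ b ⬝ᵥ c := by rw [hc]; exact psd_quad_nonneg hΔp b
    have h2 : 0 ≤ ((M1 * G) *ᵥ c) ⬝ᵥ c := by
      rw [dotProduct_comm]
      have hpsd : (M1 * G).PosSemidef := by
        have : G * (1 + X1 * G)⁻¹ = M1 * G := by rw [hM1def]; exact push_through uX uX'
        rw [← this]; exact psd_mul_inv_one_add hG hX1p
      exact psd_quad_nonneg hpsd c
    linarith


end SDA

/-- The SDARE Riccati operator `D(X) = Aᵀ (X ⊗ I_r) (I + B Bᵀ (X ⊗ I_r))⁻¹ A + Cᵀ C`,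
with `rn` realized as the index type `Fin n × Fin r`. -/
noncomputable def Dop {n m l r : ℕ}
    (A : Matrix (Fin n × Fin r) (Fin n) ℝ)
    (B : Matrix (Fin n × Fin r) (Fin m) ℝ)
    (C : Matrix (Fin l) (Fin n) ℝ)
    (X : Matrix (Fin n) (Fin n) ℝ) : Matrix (Fin n) (Fin n) ℝ :=
  Aᵀ * (X ⊗ₖ (1 : Matrix (Fin r) (Fin r) ℝ)) *
      (1 + B * Bᵀ * (X ⊗ₖ (1 : Matrix (Fin r) (Fin r) ℝ)))⁻¹ * A + Cᵀ * C

/-- Index type of cardinality `s_k = r^(2^k)`. -/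
@[reducible] def Sig (r : ℕ) : ℕ → Type
  | 0 => Fin r
  | k + 1 => Sig r k × Sig r k

instance Sig.fintype (r : ℕ) : ∀ k, Fintype (Sig r k)
  | 0 => inferInstanceAs (Fintype (Fin r))
  | k + 1 => letI := Sig.fintype r k; inferInstanceAs (Fintype (Sig r k × Sig r k))

instance Sig.decEq (r : ℕ) : ∀ k, DecidableEq (Sig r k)
  | 0 => inferInstanceAs (DecidableEq (Fin r))
  | k + 1 => letI := Sig.decEq r k; inferInstanceAs (DecidableEq (Sig r k × Sig r k))

/-- The doubling iteration `(A_k, G_k, H_k)`, where the index identification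
`ℝ^(s_k · s_k · n) ≅ ℝ^(s_{k+1} n)` is realized by reassociating the product
index types via `Matrix.submatrix`. -/
noncomputable def AGH {n r : ℕ}
    (A0 : Matrix (Fin n × Sig r 0) (Fin n) ℝ)
    (G0 : Matrix (Fin n × Sig r 0) (Fin n × Sig r 0) ℝ)
    (H0 : Matrix (Fin n) (Fin n) ℝ) :
    (k : ℕ) → Matrix (Fin n × Sig r k) (Fin n) ℝ ×
      Matrix (Fin n × Sig r k) (Fin n × Sig r k) ℝ × Matrix (Fin n) (Fin n) ℝ
  | 0 => (A0, G0, H0)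
  | k + 1 =>
      let Ak := (AGH A0 G0 H0 k).1
      let Gk := (AGH A0 G0 H0 k).2.1
      let Hk := (AGH A0 G0 H0 k).2.2
      let M := (1 + Gk * (Hk ⊗ₖ (1 : Matrix (Sig r k) (Sig r k) ℝ)))⁻¹
      (((Ak ⊗ₖ (1 : Matrix (Sig r k) (Sig r k) ℝ)) * M * Ak).submatrix
          (fun p : Fin n × (Sig r k × Sig r k) => ((p.1, p.2.1), p.2.2)) id,
       (Gk ⊗ₖ (1 : Matrix (Sig r k) (Sig r k) ℝ) +
          (Ak ⊗ₖ (1 : Matrix (Sig r k) (Sig r k) ℝ)) * M * Gk *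
            (Akᵀ ⊗ₖ (1 : Matrix (Sig r k) (Sig r k) ℝ))).submatrix
          (fun p : Fin n × (Sig r k × Sig r k) => ((p.1, p.2.1), p.2.2))
          (fun p : Fin n × (Sig r k × Sig r k) => ((p.1, p.2.1), p.2.2)),
       Hk + Akᵀ * (Hk ⊗ₖ (1 : Matrix (Sig r k) (Sig r k) ℝ)) * M * Ak)

/-- The doubling iteration computes exactly the `2^k`-th fixed point iterates:
invertibility at every step, `H_k = X_{2^k}`, monotonicity, and convergence to
the minimal positive semidefinite solution whenever a positive semidefinite
solution exists. -/
theorem stmt13 {n m l r : ℕ} (hn : 0 < n) (hm : 0 < m) (hl : 0 < l) (hr : 0 < r)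
    (A : Matrix (Fin n × Fin r) (Fin n) ℝ)
    (B : Matrix (Fin n × Fin r) (Fin m) ℝ)
    (C : Matrix (Fin l) (Fin n) ℝ)
    (Xseq : ℕ → Matrix (Fin n) (Fin n) ℝ)
    (h0 : Xseq 0 = 0)
    (hstep : ∀ t, Xseq (t + 1) = Dop A B C (Xseq t)) :
    (∀ k : ℕ, IsUnit (1 + (AGH A (B * Bᵀ) (Cᵀ * C) k).2.1 *
        ((AGH A (B * Bᵀ) (Cᵀ * C) k).2.2 ⊗ₖ (1 : Matrix (Sig r k) (Sig r k) ℝ)))) ∧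
    (∀ k : ℕ, (AGH A (B * Bᵀ) (Cᵀ * C) k).2.2 = Xseq (2 ^ k)) ∧
    (∀ k : ℕ, ((AGH A (B * Bᵀ) (Cᵀ * C) (k + 1)).2.2
        - (AGH A (B * Bᵀ) (Cᵀ * C) k).2.2).PosSemidef) ∧
    ((∃ Xhat : Matrix (Fin n) (Fin n) ℝ, Xhat.PosSemidef ∧ Xhat = Dop A B C Xhat) →
      ∃ Xinf : Matrix (Fin n) (Fin n) ℝ, Xinf.PosSemidef ∧ Xinf = Dop A B C Xinf ∧
        (∀ Xhat : Matrix (Fin n) (Fin n) ℝ, Xhat.PosSemidef → Xhat = Dop A B C Xhat →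
          (Xhat - Xinf).PosSemidef) ∧
        Filter.Tendsto (fun k => (AGH A (B * Bᵀ) (Cᵀ * C) k).2.2)
          Filter.atTop (nhds Xinf)) := by
  classical
  have hG0 : (B * Bᵀ).PosSemidef := by
    have h := Matrix.posSemidef_self_mul_conjTranspose B
    rwa [conjTranspose_eq_transpose_of_trivial] at h
  have hH0 : (Cᵀ * C).PosSemidef := by
    have h := Matrix.posSemidef_conjTranspose_mul_self C
    rwa [conjTranspose_eq_transpose_of_trivial] at h
  -- Dop is the level-0 fop
  have hDop_eq : ∀ X : Matrix (Fin n) (Fin n) ℝ,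
      Dop A B C X = SDA.fop (ν := Fin n) (s := Fin r) A (B * Bᵀ) (Cᵀ * C) X := by
    intro X; rw [Dop, SDA.fop, add_comm]
  have hDpsd : ∀ {X : Matrix (Fin n) (Fin n) ℝ}, X.PosSemidef → (Dop A B C X).PosSemidef := by
    intro X hX; rw [hDop_eq]; exact SDA.fop_psd hG0 hH0 hX
  have hDitpsd : ∀ (t : ℕ) {X : Matrix (Fin n) (Fin n) ℝ}, X.PosSemidef →
      ((Dop A B C)^[t] X).PosSemidef := by
    intro t
    induction t with
    | zero => intro X hX; simpa using hX
    | succ t ih =>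
      intro X hX
      rw [Function.iterate_succ_apply']
      exact hDpsd (ih hX)
  have hDmono : ∀ {X Y : Matrix (Fin n) (Fin n) ℝ}, X.PosSemidef → Y.PosSemidef →
      (Y - X).PosSemidef → (Dop A B C Y - Dop A B C X).PosSemidef := by
    intro X Y hX hY hXY
    rw [hDop_eq, hDop_eq]
    exact SDA.fop_mono A hG0 hH0 hX hY hXY
  -- structure of AGH at successor indices
  have hsucc : ∀ k : ℕ, AGH A (B * Bᵀ) (Cᵀ * C) (k + 1) =
      ((SDA.dA (AGH A (B * Bᵀ) (Cᵀ * C) k).1 (AGH A (B * Bᵀ) (Cᵀ * C) k).2.1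
          (AGH A (B * Bᵀ) (Cᵀ * C) k).2.2).submatrix
        (⇑(Equiv.prodAssoc (Fin n) (Sig r k) (Sig r k)).symm) id,
       (SDA.dG (AGH A (B * Bᵀ) (Cᵀ * C) k).1 (AGH A (B * Bᵀ) (Cᵀ * C) k).2.1
          (AGH A (B * Bᵀ) (Cᵀ * C) k).2.2).submatrix
        (⇑(Equiv.prodAssoc (Fin n) (Sig r k) (Sig r k)).symm)
        (⇑(Equiv.prodAssoc (Fin n) (Sig r k) (Sig r k)).symm),
       SDA.fop (AGH A (B * Bᵀ) (Cᵀ * C) k).1 (AGH A (B * Bᵀ) (Cᵀ * C) k).2.1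
         (AGH A (B * Bᵀ) (Cᵀ * C) k).2.2 (AGH A (B * Bᵀ) (Cᵀ * C) k).2.2) := by
    intro k
    rfl
  -- the key invariant
  have hinv : ∀ k : ℕ, ((AGH A (B * Bᵀ) (Cᵀ * C) k).2.1).PosSemidef ∧
      ((AGH A (B * Bᵀ) (Cᵀ * C) k).2.2).PosSemidef ∧
      (∀ X : Matrix (Fin n) (Fin n) ℝ, X.PosSemidef →
        SDA.fop (AGH A (B * Bᵀ) (Cᵀ * C) k).1 (AGH A (B * Bᵀ) (Cᵀ * C) k).2.1
          (AGH A (B * Bᵀ) (Cᵀ * C) k).2.2 X = (Dop A B C)^[2 ^ k] X) := by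
    intro k
    induction k with
    | zero =>
      refine ⟨hG0, hH0, fun X hX => ?_⟩
      rw [pow_zero, Function.iterate_one, hDop_eq]
      rfl
    | succ k ih =>
      obtain ⟨hGk, hHk, hfk⟩ := ih
      have hdGpsd := SDA.dG_psd (AGH A (B * Bᵀ) (Cᵀ * C) k).1 hGk hHk
      have hHk1 : ((AGH A (B * Bᵀ) (Cᵀ * C) (k + 1)).2.2).PosSemidef := by
        rw [hsucc k]
        exact SDA.fop_psd hGk hHk hHk
      have hGk1 : ((AGH A (B * Bᵀ) (Cᵀ * C) (k + 1)).2.1).PosSemidef := by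
        rw [hsucc k]
        exact hdGpsd.submatrix _
      refine ⟨hGk1, hHk1, fun X hX => ?_⟩
      have hD := SDA.doubling (AGH A (B * Bᵀ) (Cᵀ * C) k).1 (AGH A (B * Bᵀ) (Cᵀ * C) k).2.1
        (AGH A (B * Bᵀ) (Cᵀ * C) k).2.2 X hGk hHk hX
      have hbr := SDA.bridge_expr (ν := Fin n) (s := Sig r k)
        (SDA.dA (AGH A (B * Bᵀ) (Cᵀ * C) k).1 (AGH A (B * Bᵀ) (Cᵀ * C) k).2.1
          (AGH A (B * Bᵀ) (Cᵀ * C) k).2.2)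
        (SDA.dG (AGH A (B * Bᵀ) (Cᵀ * C) k).1 (AGH A (B * Bᵀ) (Cᵀ * C) k).2.1
          (AGH A (B * Bᵀ) (Cᵀ * C) k).2.2) X
      have e1 : SDA.fop (AGH A (B * Bᵀ) (Cᵀ * C) (k + 1)).1
          (AGH A (B * Bᵀ) (Cᵀ * C) (k + 1)).2.1 (AGH A (B * Bᵀ) (Cᵀ * C) (k + 1)).2.2 X
          = SDA.fop (AGH A (B * Bᵀ) (Cᵀ * C) k).1 (AGH A (B * Bᵀ) (Cᵀ * C) k).2.1
              (AGH A (B * Bᵀ) (Cᵀ * C) k).2.2 (AGH A (B * Bᵀ) (Cᵀ * C) k).2.2 +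
            (SDA.dA (AGH A (B * Bᵀ) (Cᵀ * C) k).1 (AGH A (B * Bᵀ) (Cᵀ * C) k).2.1
                (AGH A (B * Bᵀ) (Cᵀ * C) k).2.2)ᵀ *
              ((X ⊗ₖ (1 : Matrix (Sig r k) (Sig r k) ℝ)) ⊗ₖ (1 : Matrix (Sig r k) (Sig r k) ℝ)) *
              (1 + SDA.dG (AGH A (B * Bᵀ) (Cᵀ * C) k).1 (AGH A (B * Bᵀ) (Cᵀ * C) k).2.1
                  (AGH A (B * Bᵀ) (Cᵀ * C) k).2.2 *
                ((X ⊗ₖ (1 : Matrix (Sig r k) (Sig r k) ℝ)) ⊗ₖ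
                  (1 : Matrix (Sig r k) (Sig r k) ℝ)))⁻¹ *
              SDA.dA (AGH A (B * Bᵀ) (Cᵀ * C) k).1 (AGH A (B * Bᵀ) (Cᵀ * C) k).2.1
                (AGH A (B * Bᵀ) (Cᵀ * C) k).2.2 := by
        rw [hsucc k, SDA.fop]
        exact congrArg₂ (· + ·) rfl hbr
      rw [e1, hD.2]
      have hXit : ((Dop A B C)^[2 ^ k] X).PosSemidef := hDitpsd _ hX
      rw [hfk X hX, hfk _ hXit, ← Function.iterate_add_apply]
      have h2 : (2 : ℕ) ^ k + 2 ^ k = 2 ^ (k + 1) := by ring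
      rw [h2]
  -- Xseq is the iterate of Dop
  have hXseq : ∀ t : ℕ, Xseq t = (Dop A B C)^[t] 0 := by
    intro t
    induction t with
    | zero => simpa using h0
    | succ t ih => rw [hstep t, ih, Function.iterate_succ_apply']
  have hXpsd : ∀ t : ℕ, (Xseq t).PosSemidef := by
    intro t; rw [hXseq t]; exact hDitpsd t Matrix.PosSemidef.zero
  -- H_k equals Xseq (2^k)
  have part2 : ∀ k : ℕ, (AGH A (B * Bᵀ) (Cᵀ * C) k).2.2 = Xseq (2 ^ k) := by
    intro k
    obtain ⟨hGk, hHk, hfk⟩ := hinv k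
    have hf0 := hfk 0 Matrix.PosSemidef.zero
    have hfop0 : SDA.fop (AGH A (B * Bᵀ) (Cᵀ * C) k).1 (AGH A (B * Bᵀ) (Cᵀ * C) k).2.1
        (AGH A (B * Bᵀ) (Cᵀ * C) k).2.2 0 = (AGH A (B * Bᵀ) (Cᵀ * C) k).2.2 := by
      rw [SDA.fop, Matrix.zero_kronecker, Matrix.mul_zero, Matrix.zero_mul, Matrix.zero_mul,
        add_zero]
    rw [hXseq, ← hf0, hfop0]
  -- monotonicity of Xseq
  have hmono : ∀ t u : ℕ, (Xseq (t + u) - Xseq t).PosSemidef := by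
    intro t
    induction t with
    | zero =>
      intro u
      rw [h0, zero_add, sub_zero]
      exact hXpsd u
    | succ t ih =>
      intro u
      have h1 : t + 1 + u = (t + u) + 1 := by ring
      rw [h1, hstep, hstep]
      exact hDmono (hXpsd t) (hXpsd (t + u)) (ih u)
  have part1 : ∀ k : ℕ, IsUnit (1 + (AGH A (B * Bᵀ) (Cᵀ * C) k).2.1 *
      ((AGH A (B * Bᵀ) (Cᵀ * C) k).2.2 ⊗ₖ (1 : Matrix (Sig r k) (Sig r k) ℝ))) := by
    intro k
    obtain ⟨hGk, hHk, _⟩ := hinv k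
    exact SDA.isUnit_one_add_psd_mul hGk (SDA.psd_kron_one hHk)
  have part3 : ∀ k : ℕ, ((AGH A (B * Bᵀ) (Cᵀ * C) (k + 1)).2.2
      - (AGH A (B * Bᵀ) (Cᵀ * C) k).2.2).PosSemidef := by
    intro k
    rw [part2, part2]
    have h2 : (2 : ℕ) ^ (k + 1) = 2 ^ k + 2 ^ k := by ring
    rw [h2]
    exact hmono (2 ^ k) (2 ^ k)
  refine ⟨part1, part2, part3, ?_⟩
  rintro ⟨Xh0, hXh0psd, hXh0fix⟩
  have hbound : ∀ (Xh : Matrix (Fin n) (Fin n) ℝ), Xh.PosSemidef → Xh = Dop A B C Xh →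
      ∀ t, (Xh - Xseq t).PosSemidef := by
    intro Xh hpsd hfix t
    induction t with
    | zero => rw [h0, sub_zero]; exact hpsd
    | succ t ih =>
      rw [hstep t]
      nth_rewrite 1 [hfix]
      exact hDmono (hXpsd t) hpsd ih
  have hquadcont : ∀ x : Fin n → ℝ, Continuous fun M : Matrix (Fin n) (Fin n) ℝ =>
      x ⬝ᵥ (M *ᵥ x) := fun x =>
    continuous_const.dotProduct (continuous_id.matrix_mulVec continuous_const)
  have hqmono : ∀ x : Fin n → ℝ, Monotone fun t => x ⬝ᵥ (Xseq t *ᵥ x) := by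
    intro x
    apply monotone_nat_of_le_succ
    intro t
    have h1 := SDA.psd_quad_nonneg (hmono t 1) x
    rw [Matrix.sub_mulVec, dotProduct_sub] at h1
    linarith
  have hqbdd : ∀ x : Fin n → ℝ, BddAbove (Set.range fun t => x ⬝ᵥ (Xseq t *ᵥ x)) := by
    intro x
    refine ⟨x ⬝ᵥ (Xh0 *ᵥ x), ?_⟩
    rintro y ⟨t, rfl⟩
    have h1 := SDA.psd_quad_nonneg (hbound Xh0 hXh0psd hXh0fix t) x
    rw [Matrix.sub_mulVec, dotProduct_sub] at h1
    linarith
  set L : (Fin n → ℝ) → ℝ := fun x => ⨆ t, x ⬝ᵥ (Xseq t *ᵥ x) with hLdef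
  have htq : ∀ x, Filter.Tendsto (fun t => x ⬝ᵥ (Xseq t *ᵥ x)) Filter.atTop (nhds (L x)) :=
    fun x => tendsto_atTop_ciSup (hqmono x) (hqbdd x)
  set Xinf : Matrix (Fin n) (Fin n) ℝ := Matrix.of fun i j =>
    (L (Pi.single i 1 + Pi.single j 1) - L (Pi.single i 1) - L (Pi.single j 1)) / 2
    with hXinfdef
  have polar : ∀ (t : ℕ) (i j : Fin n), Xseq t i j =
      ((Pi.single i 1 + Pi.single j 1) ⬝ᵥ (Xseq t *ᵥ (Pi.single i 1 + Pi.single j 1))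
        - Pi.single i 1 ⬝ᵥ (Xseq t *ᵥ Pi.single i 1)
        - Pi.single j 1 ⬝ᵥ (Xseq t *ᵥ Pi.single j 1)) / 2 := by
    intro t i j
    have hsym : Xseq t j i = Xseq t i j := by
      have h := SDA.real_transpose_eq (hXpsd t).isHermitian
      calc Xseq t j i = (Xseq t)ᵀ i j := rfl
        _ = Xseq t i j := by rw [h]
    simp only [Matrix.mulVec_add, dotProduct_add, add_dotProduct, Matrix.mulVec_single_one,
      single_dotProduct, Matrix.col_apply, mul_one, one_mul]
    rw [hsym]
    ring
  have htij : ∀ i j, Filter.Tendsto (fun t => Xseq t i j) Filter.atTop (nhds (Xinf i j)) := by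
    intro i j
    have h1 := (((htq (Pi.single i 1 + Pi.single j 1)).sub (htq (Pi.single i 1))).sub
      (htq (Pi.single j 1))).div_const (2 : ℝ)
    have h2 : Xinf i j = (L (Pi.single i 1 + Pi.single j 1) - L (Pi.single i 1)
        - L (Pi.single j 1)) / 2 := rfl
    rw [h2]
    exact Filter.Tendsto.congr (fun t => (polar t i j).symm) h1
  have htend : Filter.Tendsto Xseq Filter.atTop (nhds Xinf) := by
    apply tendsto_pi_nhds.mpr; intro i; apply tendsto_pi_nhds.mpr; intro j; exact htij i j
  have hXinfpsd : Xinf.PosSemidef := by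
    refine Matrix.PosSemidef.of_dotProduct_mulVec_nonneg ?_ ?_
    · apply SDA.real_isHermitian
      ext i j
      show Xinf j i = Xinf i j
      simp only [hXinfdef, Matrix.of_apply]
      rw [add_comm (Pi.single j 1)]
      ring
    · intro x
      have hsx : star x = x := by simp
      rw [hsx]
      have h1 : Filter.Tendsto (fun t => x ⬝ᵥ (Xseq t *ᵥ x)) Filter.atTop
          (nhds (x ⬝ᵥ (Xinf *ᵥ x))) := ((hquadcont x).continuousAt.tendsto).comp htend
      exact ge_of_tendsto' h1 (fun t => SDA.psd_quad_nonneg (hXpsd t) x)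
  have hkroncont : Continuous fun M : Matrix (Fin n) (Fin n) ℝ =>
      M ⊗ₖ (1 : Matrix (Fin r) (Fin r) ℝ) := by
    apply continuous_matrix
    rintro ⟨i1, i2⟩ ⟨j1, j2⟩
    exact (continuous_id.matrix_elem i1 j1).mul continuous_const
  have hf1 : Continuous fun M : Matrix (Fin n) (Fin n) ℝ =>
      1 + B * Bᵀ * (M ⊗ₖ (1 : Matrix (Fin r) (Fin r) ℝ)) :=
    continuous_const.add (continuous_const.matrix_mul hkroncont)
  have hu : IsUnit (1 + B * Bᵀ * (Xinf ⊗ₖ (1 : Matrix (Fin r) (Fin r) ℝ))) :=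
    SDA.isUnit_one_add_psd_mul hG0 (SDA.psd_kron_one hXinfpsd)
  have hud : IsUnit (1 + B * Bᵀ * (Xinf ⊗ₖ (1 : Matrix (Fin r) (Fin r) ℝ))).det :=
    (Matrix.isUnit_iff_isUnit_det _).mp hu
  have hinv1 : ContinuousAt Inv.inv
      (1 + B * Bᵀ * (Xinf ⊗ₖ (1 : Matrix (Fin r) (Fin r) ℝ))) := by
    apply continuousAt_matrix_inv
    have h := NormedRing.inverse_continuousAt hud.unit
    rwa [IsUnit.unit_spec] at h
  have hinvat : ContinuousAt (fun M : Matrix (Fin n) (Fin n) ℝ =>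
      (1 + B * Bᵀ * (M ⊗ₖ (1 : Matrix (Fin r) (Fin r) ℝ)))⁻¹) Xinf := by
    have h5 := ContinuousAt.comp (x := Xinf)
      (f := fun M : Matrix (Fin n) (Fin n) ℝ =>
        1 + B * Bᵀ * (M ⊗ₖ (1 : Matrix (Fin r) (Fin r) ℝ))) hinv1 hf1.continuousAt
    exact h5
  have hDcont : ContinuousAt (Dop A B C) Xinf := by
    have hg1 : Continuous fun M : Matrix (Fin n) (Fin n) ℝ =>
        Aᵀ * (M ⊗ₖ (1 : Matrix (Fin r) (Fin r) ℝ)) := continuous_const.matrix_mul hkroncont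
    have hmul1 : Continuous fun pq : Matrix (Fin n) (Fin n × Fin r) ℝ ×
        Matrix (Fin n × Fin r) (Fin n × Fin r) ℝ => pq.1 * pq.2 :=
      continuous_fst.matrix_mul continuous_snd
    have hc1 : ContinuousAt (fun M : Matrix (Fin n) (Fin n) ℝ =>
        Aᵀ * (M ⊗ₖ (1 : Matrix (Fin r) (Fin r) ℝ)) *
          (1 + B * Bᵀ * (M ⊗ₖ (1 : Matrix (Fin r) (Fin r) ℝ)))⁻¹) Xinf :=
      hmul1.continuousAt.comp (hg1.continuousAt.prodMk hinvat)
    have hmul2 : Continuous fun pq : Matrix (Fin n) (Fin n × Fin r) ℝ ×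
        Matrix (Fin n × Fin r) (Fin n) ℝ => pq.1 * pq.2 :=
      continuous_fst.matrix_mul continuous_snd
    have hc2 : ContinuousAt (fun M : Matrix (Fin n) (Fin n) ℝ =>
        Aᵀ * (M ⊗ₖ (1 : Matrix (Fin r) (Fin r) ℝ)) *
          (1 + B * Bᵀ * (M ⊗ₖ (1 : Matrix (Fin r) (Fin r) ℝ)))⁻¹ * A) Xinf :=
      hmul2.continuousAt.comp (hc1.prodMk continuousAt_const)
    exact hc2.add continuousAt_const
  have h1 : Filter.Tendsto (fun t => Xseq (t + 1)) Filter.atTop (nhds Xinf) :=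
    htend.comp (Filter.tendsto_add_atTop_nat 1)
  have h2 : Filter.Tendsto (fun t => Xseq (t + 1)) Filter.atTop (nhds (Dop A B C Xinf)) := by
    have h3 := hDcont.tendsto.comp htend
    exact Filter.Tendsto.congr (fun t => (hstep t).symm) h3
  have hfixXinf : Xinf = Dop A B C Xinf := tendsto_nhds_unique h1 h2
  refine ⟨Xinf, hXinfpsd, hfixXinf, ?_, ?_⟩
  · intro Xhat hpsd hfix
    refine Matrix.PosSemidef.of_dotProduct_mulVec_nonneg ?_ ?_
    · exact hpsd.isHermitian.sub hXinfpsd.isHermitian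
    · intro x
      have hsx : star x = x := by simp
      rw [hsx]
      have hcont2 : Continuous fun M : Matrix (Fin n) (Fin n) ℝ =>
          x ⬝ᵥ ((Xhat - M) *ᵥ x) := (hquadcont x).comp (continuous_const.sub continuous_id)
      have h4 : Filter.Tendsto (fun t => x ⬝ᵥ ((Xhat - Xseq t) *ᵥ x)) Filter.atTop
          (nhds (x ⬝ᵥ ((Xhat - Xinf) *ᵥ x))) := hcont2.continuousAt.tendsto.comp htend
      exact ge_of_tendsto' h4 (fun t => SDA.psd_quad_nonneg (hbound Xhat hpsd hfix t) x)
  · have heq : (fun k => (AGH A (B * Bᵀ) (Cᵀ * C) k).2.2) = fun k => Xseq (2 ^ k) :=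
      funext part2
    rw [heq]
    exact htend.comp (tendsto_pow_atTop_atTop_of_one_lt one_lt_two)
end

section
/- Let X ∈ ℝ^{n×n} be a symmetric solution of the SCARE such that I_m + B̂ᵀ(X ⊗ I_{r−1})B̂ is invertible, and let γ > 0 be such that A_γ := A − γI_n is invertible and, with F̂ = −(I_m + B̂ᵀ(X ⊗ I_{r−1})B̂)⁻¹(XB + Âᵀ(X ⊗ I_{r−1})B̂)ᵀ and A_F = A + BF̂, the matrix A_F − γI_n is invertible. Write X_d = diag(X, X ⊗ I_{r−1}) ∈ ℝ^{rn×rn} (block diagonal) and assume I_{rn} + G₀ X_d is invertible. Then X solves the stochastic discrete-time algebraic Riccati equation X = E₀ᵀ X_d (I_{rn} + G₀ X_d)⁻¹ E₀ + H_γ (the SCARE is transformed, by the Cayley/Möbius transformation with parameter γ, into an SDARE). -/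
open Matrix
open scoped Kronecker

/-!
With the optimal feedback `F̂`, the SCARE becomes the closed-loop Lyapunov equation
`A_Fᵀ X + X A_F + (Â + B̂F̂)ᵀ (X ⊗ I) (Â + B̂F̂) + CᵀC + F̂ᵀF̂ = 0`. Its Cayley transform with
parameter `γ` is the Stein equation `X = E_cᵀ X_d E_c + 2γ (A_F - γ)⁻ᵀ (CᵀC + F̂ᵀF̂) (A_F - γ)⁻¹`,
where `E_c` stacks `(A_F + γ)(A_F - γ)⁻¹` over `√(2γ) (Â + B̂F̂)(A_F - γ)⁻¹`.
The matrix `E₀` factors as `(I + G₀ X_d) E_c`, which removes the inverse from the SDARE, and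
what is left, `2γ (A_F - γ)⁻ᵀ (CᵀC + F̂ᵀF̂) (A_F - γ)⁻¹ = H_γ + E_cᵀ X_d G₀ X_d E_c`, holds
because the block rows of `[[I, Z_γ], [-Z_γᵀ, I]]` are orthogonal.
-/

namespace Matrix

variable {R m₁ m₂ n : Type*}

theorem fromRows_add_fromRows [Add R] (A₁ B₁ : Matrix m₁ n R) (A₂ B₂ : Matrix m₂ n R) :
    fromRows A₁ A₂ + fromRows B₁ B₂ = fromRows (A₁ + B₁) (A₂ + B₂) := by
  ext (i | i) j <;> rfl

theorem smul_fromRows {α : Type*} [SMul α R] (c : α) (A₁ : Matrix m₁ n R) (A₂ : Matrix m₂ n R) :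
    c • fromRows A₁ A₂ = fromRows (c • A₁) (c • A₂) := by
  ext (i | i) j <;> rfl

variable {N M L : Type*} [Fintype M] [Fintype L]

theorem isUnit_det_one_add_transpose_mul_self [DecidableEq M] (Z : Matrix L M ℝ) :
    IsUnit (1 + Zᵀ * Z).det := by
  have h := posSemidef_conjTranspose_mul_self Z
  rw [conjTranspose_eq_transpose_of_trivial] at h
  exact (isUnit_iff_isUnit_det _).mp (PosDef.one.add_posSemidef h).isUnit

theorem isUnit_det_one_add_mul_self_transpose [DecidableEq L] (Z : Matrix L M ℝ) :
    IsUnit (1 + Z * Zᵀ).det := by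
  simpa using isUnit_det_one_add_transpose_mul_self Zᵀ

variable [DecidableEq M] [DecidableEq L]

theorem one_add_mul_self_transpose_inv_mul (Z : Matrix L M ℝ) :
    (1 + Z * Zᵀ)⁻¹ * Z = Z * (1 + Zᵀ * Z)⁻¹ := by
  have h : (1 + Z * Zᵀ) * Z = Z * (1 + Zᵀ * Z) := by
    simp only [Matrix.add_mul, Matrix.mul_add, Matrix.one_mul, Matrix.mul_one, Matrix.mul_assoc]
  calc (1 + Z * Zᵀ)⁻¹ * Z
      = (1 + Z * Zᵀ)⁻¹ * ((1 + Z * Zᵀ) * Z) * (1 + Zᵀ * Z)⁻¹ := by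
        rw [h, Matrix.mul_assoc, Matrix.mul_assoc,
          mul_nonsing_inv _ (isUnit_det_one_add_transpose_mul_self Z), Matrix.mul_one]
    _ = Z * (1 + Zᵀ * Z)⁻¹ := by
        rw [← Matrix.mul_assoc, nonsing_inv_mul _ (isUnit_det_one_add_mul_self_transpose Z),
          Matrix.one_mul]

theorem one_add_mul_self_transpose_inv_add (Z : Matrix L M ℝ) :
    (1 + Z * Zᵀ)⁻¹ + Z * (1 + Zᵀ * Z)⁻¹ * Zᵀ = 1 := by
  rw [← one_add_mul_self_transpose_inv_mul, Matrix.mul_assoc, ← Matrix.mul_one (1 + Z * Zᵀ)⁻¹,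
    Matrix.mul_assoc, ← Matrix.mul_add, Matrix.one_mul,
    nonsing_inv_mul _ (isUnit_det_one_add_mul_self_transpose Z)]

/-- The block rows of `[[1, Z], [-Zᵀ, 1]]` are orthogonal, with Gram matrix
`diag(1 + ZZᵀ, 1 + ZᵀZ)`. -/
theorem transpose_mul_inv_mul_add_transpose_mul_inv_mul [Fintype N]
    (Z : Matrix L M ℝ) (P : Matrix L N ℝ) (F : Matrix M N ℝ) :
    (P + Z * F)ᵀ * (1 + Z * Zᵀ)⁻¹ * (P + Z * F) + (F - Zᵀ * P)ᵀ * (1 + Zᵀ * Z)⁻¹ * (F - Zᵀ * P)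
      = Pᵀ * P + Fᵀ * F := by
  have hSZ := one_add_mul_self_transpose_inv_mul Z
  have hTZ := one_add_mul_self_transpose_inv_mul Zᵀ
  have hS := one_add_mul_self_transpose_inv_add Z
  have hT := one_add_mul_self_transpose_inv_add Zᵀ
  simp only [transpose_transpose] at hTZ hT
  calc _ = Pᵀ * ((1 + Z * Zᵀ)⁻¹ + Z * (1 + Zᵀ * Z)⁻¹ * Zᵀ) * P
        + Fᵀ * ((1 + Zᵀ * Z)⁻¹ + Zᵀ * (1 + Z * Zᵀ)⁻¹ * Z) * F
        + Pᵀ * ((1 + Z * Zᵀ)⁻¹ * Z - Z * (1 + Zᵀ * Z)⁻¹) * F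
        + Fᵀ * (Zᵀ * (1 + Z * Zᵀ)⁻¹ - (1 + Zᵀ * Z)⁻¹ * Zᵀ) * P := by
        simp only [transpose_add, transpose_sub, Matrix.transpose_mul, transpose_transpose,
          Matrix.add_mul, Matrix.mul_add, Matrix.sub_mul, Matrix.mul_sub, Matrix.mul_assoc]
        abel
    _ = Pᵀ * P + Fᵀ * F := by
        rw [hS, hT, hSZ, hTZ, sub_self, sub_self]
        simp

end Matrix

namespace Riccati

section Feedback

variable {N M L R : Type*} [Fintype N] [Fintype R]
  {A : Matrix N N ℝ} {Ah : Matrix R N ℝ} {B : Matrix N M ℝ} {Bh : Matrix R M ℝ}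
  {C : Matrix L N ℝ} {X : Matrix N N ℝ} {W : Matrix R R ℝ} {Fh : Matrix M N ℝ}

theorem cross_transpose (hX : Xᵀ = X) (hW : Wᵀ = W) :
    (X * B + Ahᵀ * W * Bh)ᵀ = Bᵀ * X + Bhᵀ * W * Ah := by
  simp only [transpose_add, Matrix.transpose_mul, transpose_transpose, hX, hW, Matrix.mul_assoc]

variable [Fintype M]

theorem lyapunov_closedLoop [Fintype L]
    (hgain : Fh + Bᵀ * X + Bhᵀ * W * (Ah + Bh * Fh) = 0)
    (hcl : Aᵀ * X + X * (A + B * Fh) + Ahᵀ * W * (Ah + Bh * Fh) + Cᵀ * C = 0) :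
    (A + B * Fh)ᵀ * X + X * (A + B * Fh) + (Ah + Bh * Fh)ᵀ * W * (Ah + Bh * Fh)
      + (Cᵀ * C + Fhᵀ * Fh) = 0 := by
  calc _ = (Aᵀ * X + X * (A + B * Fh) + Ahᵀ * W * (Ah + Bh * Fh) + Cᵀ * C)
        + Fhᵀ * (Fh + Bᵀ * X + Bhᵀ * W * (Ah + Bh * Fh)) := by
        simp only [transpose_add, Matrix.transpose_mul, Matrix.add_mul, Matrix.mul_add,
          Matrix.mul_assoc]; abel
    _ = 0 := by rw [hcl, hgain, Matrix.mul_zero, add_zero]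

variable [DecidableEq M]

theorem closedLoop_eq_zero [Fintype L] (hX : Xᵀ = X) (hW : Wᵀ = W)
    (hscare : Aᵀ * X + X * A + Cᵀ * C + Ahᵀ * W * Ah -
      (X * B + Ahᵀ * W * Bh) * (1 + Bhᵀ * W * Bh)⁻¹ * (Bᵀ * X + Bhᵀ * W * Ah) = 0)
    (hFh : Fh = -((1 + Bhᵀ * W * Bh)⁻¹ * (X * B + Ahᵀ * W * Bh)ᵀ)) :
    Aᵀ * X + X * (A + B * Fh) + Ahᵀ * W * (Ah + Bh * Fh) + Cᵀ * C = 0 := by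
  rw [cross_transpose hX hW] at hFh
  rw [← hscare, hFh]
  simp only [Matrix.mul_add, Matrix.add_mul, Matrix.mul_neg, Matrix.mul_assoc]
  abel

theorem feedback_add_eq_zero (hX : Xᵀ = X) (hW : Wᵀ = W)
    (hP : IsUnit (1 + Bhᵀ * W * Bh).det)
    (hFh : Fh = -((1 + Bhᵀ * W * Bh)⁻¹ * (X * B + Ahᵀ * W * Bh)ᵀ)) :
    Fh + Bᵀ * X + Bhᵀ * W * (Ah + Bh * Fh) = 0 := by
  have hPFh : (1 + Bhᵀ * W * Bh) * Fh = -(Bᵀ * X + Bhᵀ * W * Ah) := by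
    rw [hFh, Matrix.mul_neg, mul_nonsing_inv_cancel_left _ _ hP, cross_transpose hX hW]
  calc _ = (1 + Bhᵀ * W * Bh) * Fh + (Bᵀ * X + Bhᵀ * W * Ah) := by
        simp only [Matrix.mul_add, Matrix.add_mul, Matrix.one_mul, Matrix.mul_assoc]; abel
    _ = 0 := by rw [hPFh, neg_add_cancel]

end Feedback

section Cayley

variable {N R : Type*} [Fintype N] [Fintype R] [DecidableEq N]

/-- `1 + 2γ (F - γ)⁻¹ = (F + γ)(F - γ)⁻¹` is the Cayley transform of `F`. For the closed loop
`F = A + B F̂`, `H = Â + B̂ F̂` this is the factor `E_c` with `E₀ = (1 + G₀ X_d) E_c`. -/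
noncomputable def cayleyFactor (γ : ℝ) (F : Matrix N N ℝ) (H : Matrix R N ℝ) :
    Matrix (N ⊕ R) N ℝ :=
  fromRows (1 + (2 * γ) • (F - γ • 1)⁻¹) (√(2 * γ) • (H * (F - γ • 1)⁻¹))

theorem one_add_smul_inv_eq {γ : ℝ} {F : Matrix N N ℝ} (hF : IsUnit (F - γ • 1).det) :
    1 + (2 * γ) • (F - γ • 1)⁻¹ = (F + γ • 1) * (F - γ • 1)⁻¹ := by
  calc _ = (F - γ • 1) * (F - γ • 1)⁻¹ + (2 * γ) • (F - γ • 1)⁻¹ := by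
        rw [mul_nonsing_inv _ hF]
    _ = _ := by simp only [Matrix.sub_mul, Matrix.add_mul, Matrix.smul_mul, Matrix.one_mul]; module

theorem cayleyFactor_stein {γ : ℝ} {F X Q : Matrix N N ℝ} {H : Matrix R N ℝ}
    {W : Matrix R R ℝ} (hγ : 0 ≤ γ) (hF : IsUnit (F - γ • 1).det)
    (hlyap : Fᵀ * X + X * F + Hᵀ * W * H + Q = 0) :
    (cayleyFactor γ F H)ᵀ * fromBlocks X 0 0 W * cayleyFactor γ F H
      + (2 * γ) • ((F - γ • 1)⁻¹ᵀ * Q * (F - γ • 1)⁻¹) = X := by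
  rw [cayleyFactor, Matrix.mul_assoc, one_add_smul_inv_eq hF]
  have hq : √(2 * γ) * √(2 * γ) = 2 * γ := Real.mul_self_sqrt (by positivity)
  have hright : (F - γ • 1) * (F - γ • 1)⁻¹ = 1 := mul_nonsing_inv _ hF
  have hleft : (F - γ • 1)⁻¹ᵀ * (F - γ • 1)ᵀ = 1 := by
    rw [← Matrix.transpose_mul, hright, transpose_one]
  set G := (F - γ • 1)⁻¹
  calc _ = Gᵀ * ((F - γ • 1)ᵀ * X * (F - γ • 1)
          + (2 * γ) • (Fᵀ * X + X * F + Hᵀ * W * H + Q)) * G := by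
        rw [transpose_fromRows, fromBlocks_mul_fromRows, fromCols_mul_fromRows]
        simp only [Matrix.zero_mul, smul_zero, add_zero, zero_add, transpose_add, transpose_sub,
          transpose_smul, Matrix.transpose_mul, transpose_one, Matrix.add_mul, Matrix.mul_add,
          Matrix.sub_mul, Matrix.mul_sub, Matrix.smul_mul, Matrix.mul_smul, Matrix.one_mul,
          Matrix.mul_one, Matrix.mul_assoc, smul_add, smul_sub, smul_smul, hq]
        module
    _ = X := by
        rw [hlyap, smul_zero, add_zero, ← Matrix.mul_assoc, ← Matrix.mul_assoc, hleft,
          Matrix.one_mul, Matrix.mul_assoc, hright, Matrix.mul_one]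

end Cayley

section Woodbury

variable {N M L : Type*} [Fintype N] [Fintype M] [Fintype L] [DecidableEq N] [DecidableEq L]
  {S : Matrix N N ℝ} {B : Matrix N M ℝ} {C : Matrix L N ℝ} {Z : Matrix L M ℝ}

theorem isUnit_det_add_mul_transpose_mul (hS : IsUnit S.det) (hZ : Z = C * S⁻¹ * B) :
    IsUnit (S + B * Zᵀ * C).det := by
  have hfac : S + B * Zᵀ * C = S * (1 + S⁻¹ * (B * Zᵀ) * C) := by
    rw [Matrix.mul_add, Matrix.mul_one, Matrix.mul_assoc, Matrix.mul_assoc,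
      mul_nonsing_inv_cancel_left _ _ hS, Matrix.mul_assoc]
  rw [hfac, det_mul, det_one_add_mul_comm, ← Matrix.mul_assoc, ← Matrix.mul_assoc, ← hZ]
  exact hS.mul (isUnit_det_one_add_mul_self_transpose Z)

variable [DecidableEq M]

theorem inv_add_mul_transpose_mul_mul (hS : IsUnit S.det) (hZ : Z = C * S⁻¹ * B) :
    (S + B * Zᵀ * C)⁻¹ * B = S⁻¹ * B * (1 + Zᵀ * Z)⁻¹ := by
  have h : (S + B * Zᵀ * C) * (S⁻¹ * B * (1 + Zᵀ * Z)⁻¹) = B := by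
    calc _ = B * ((1 + Zᵀ * Z) * (1 + Zᵀ * Z)⁻¹) := by
          rw [hZ]
          simp only [Matrix.add_mul, Matrix.mul_add, Matrix.one_mul, Matrix.mul_assoc,
            mul_nonsing_inv_cancel_left _ _ hS]
      _ = B := by rw [mul_nonsing_inv _ (isUnit_det_one_add_transpose_mul_self Z), Matrix.mul_one]
  calc _ = (S + B * Zᵀ * C)⁻¹ * ((S + B * Zᵀ * C) * (S⁻¹ * B * (1 + Zᵀ * Z)⁻¹)) := by rw [h]
    _ = _ := nonsing_inv_mul_cancel_left _ _ (isUnit_det_add_mul_transpose_mul hS hZ)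

theorem inv_add_mul_transpose_mul_eq {Fh : Matrix M N ℝ} (hS : IsUnit S.det)
    (hF : IsUnit (S + B * Fh).det) (hZ : Z = C * S⁻¹ * B) :
    (S + B * Zᵀ * C)⁻¹
      = (S + B * Fh)⁻¹ + S⁻¹ * B * (1 + Zᵀ * Z)⁻¹ * ((Fh - Zᵀ * C) * (S + B * Fh)⁻¹) := by
  set T := S + B * Zᵀ * C
  calc T⁻¹ = T⁻¹ * (T + B * (Fh - Zᵀ * C)) * (S + B * Fh)⁻¹ := by
        rw [show T + B * (Fh - Zᵀ * C) = S + B * Fh by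
              simp only [T, Matrix.mul_sub, Matrix.mul_assoc]; abel,
          Matrix.mul_assoc, mul_nonsing_inv _ hF, Matrix.mul_one]
    _ = _ := by
        rw [Matrix.mul_add, nonsing_inv_mul _ (isUnit_det_add_mul_transpose_mul hS hZ),
          Matrix.add_mul, Matrix.one_mul, ← Matrix.mul_assoc, inv_add_mul_transpose_mul_mul hS hZ,
          Matrix.mul_assoc]

end Woodbury

section Transformation

variable {N M L R : Type*} [Fintype N] [Fintype M] [Fintype L] [DecidableEq N]
  {A : Matrix N N ℝ} {Ah : Matrix R N ℝ} {B : Matrix N M ℝ} {Bh : Matrix R M ℝ}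
  {C : Matrix L N ℝ} {Fh : Matrix M N ℝ} {Z : Matrix L M ℝ} {γ : ℝ}

theorem transpose_mul_fromBlocks_mul_cayleyFactor [Fintype R] {X : Matrix N N ℝ}
    {W : Matrix R R ℝ} (hA : IsUnit (A - γ • 1).det)
    (hF : IsUnit (A + B * Fh - γ • 1).det) (hZ : Z = C * (A - γ • 1)⁻¹ * B)
    (hgain : Fh + Bᵀ * X + Bhᵀ * W * (Ah + Bh * Fh) = 0)
    (hcl : Aᵀ * X + X * (A + B * Fh) + Ahᵀ * W * (Ah + Bh * Fh) + Cᵀ * C = 0) :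
    (fromRows (√(2 * γ) • ((A - γ • 1)⁻¹ * B)) (Ah * (A - γ • 1)⁻¹ * B - Bh))ᵀ
        * fromBlocks X 0 0 W * cayleyFactor γ (A + B * Fh) (Ah + Bh * Fh)
      = √(2 * γ) • ((Fh - Zᵀ * C) * (A + B * Fh - γ • 1)⁻¹) := by
  have hleft : (A - γ • 1)⁻¹ᵀ * (A - γ • 1)ᵀ = 1 := by
    rw [← Matrix.transpose_mul, mul_nonsing_inv _ hA, transpose_one]
  rw [cayleyFactor, one_add_smul_inv_eq hF, Matrix.mul_assoc, transpose_fromRows,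
    fromBlocks_mul_fromRows, fromCols_mul_fromRows, hZ]
  set G := (A + B * Fh - γ • 1)⁻¹
  set Ac := Ah + Bh * Fh
  calc _ = √(2 * γ) • ((Fh - (C * (A - γ • 1)⁻¹ * B)ᵀ * C) * G)
        + √(2 * γ) • (Bᵀ * (A - γ • 1)⁻¹ᵀ
              * (Aᵀ * X + X * (A + B * Fh) + Ahᵀ * W * Ac + Cᵀ * C) * G
          - (Fh + Bᵀ * X + Bhᵀ * W * Ac) * G
          + Bᵀ * (1 - (A - γ • 1)⁻¹ᵀ * (A - γ • 1)ᵀ) * X * G) := by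
        simp only [Matrix.zero_mul, smul_zero, add_zero, zero_add, transpose_sub, transpose_smul,
          Matrix.transpose_mul, transpose_one, Matrix.add_mul, Matrix.mul_add, Matrix.sub_mul,
          Matrix.mul_sub, Matrix.smul_mul, Matrix.mul_smul, Matrix.one_mul, Matrix.mul_one, Matrix.mul_assoc, smul_add, smul_sub]
        module
    _ = _ := by
        rw [hcl, hgain, hleft, sub_self]
        simp only [Matrix.zero_mul, Matrix.mul_zero, sub_zero, add_zero, smul_zero]

variable [DecidableEq M] [DecidableEq L]

theorem fromRows_mul_inv_eq_cayleyFactor_add (hγ : 0 ≤ γ) (hA : IsUnit (A - γ • 1).det)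
    (hF : IsUnit (A + B * Fh - γ • 1).det) (hZ : Z = C * (A - γ • 1)⁻¹ * B) :
    fromRows (A - γ • 1 + (2 * γ) • 1 + B * Zᵀ * C) (√(2 * γ) • (Ah + Bh * Zᵀ * C))
        * (1 + (A - γ • 1)⁻¹ * B * Zᵀ * C)⁻¹ * (A - γ • 1)⁻¹
      = cayleyFactor γ (A + B * Fh) (Ah + Bh * Fh)
        + √(2 * γ) • (fromRows (√(2 * γ) • ((A - γ • 1)⁻¹ * B)) (Ah * (A - γ • 1)⁻¹ * B - Bh)
          * ((1 + Zᵀ * Z)⁻¹ * ((Fh - Zᵀ * C) * (A + B * Fh - γ • 1)⁻¹))) := by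
  have hq : √(2 * γ) * √(2 * γ) = 2 * γ := Real.mul_self_sqrt (by positivity)
  set S := A - γ • 1
  have hFS : A + B * Fh - γ • 1 = S + B * Fh := by simp only [S]; abel
  rw [hFS] at hF ⊢
  have hdet := isUnit_det_add_mul_transpose_mul hA hZ
  have hN : (1 + S⁻¹ * B * Zᵀ * C)⁻¹ * S⁻¹ = (S + B * Zᵀ * C)⁻¹ := by
    rw [← Matrix.mul_inv_rev, Matrix.mul_add, Matrix.mul_one, Matrix.mul_assoc, Matrix.mul_assoc,
      mul_nonsing_inv_cancel_left _ _ hA, Matrix.mul_assoc]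
  have htop : (S + (2 * γ) • 1 + B * Zᵀ * C) * (S + B * Zᵀ * C)⁻¹
      = 1 + (2 * γ) • (S + B * Zᵀ * C)⁻¹ := by
    rw [add_right_comm, Matrix.add_mul, mul_nonsing_inv _ hdet, Matrix.smul_mul, Matrix.one_mul]
  have hZC : ∀ Y : Matrix M N ℝ, C * (S⁻¹ * (B * Y)) = Z * Y := by
    intro Y; rw [hZ]; simp only [Matrix.mul_assoc]
  have hti : (1 + Zᵀ * Z) * (1 + Zᵀ * Z)⁻¹ = 1 :=
    mul_nonsing_inv _ (isUnit_det_one_add_transpose_mul_self Z)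
  rw [Matrix.mul_assoc, hN, fromRows_mul, htop, Matrix.smul_mul,
    inv_add_mul_transpose_mul_eq hA hF hZ, cayleyFactor, fromRows_mul, smul_fromRows,
    fromRows_add_fromRows, fromRows_ext_iff]
  set D := (Fh - Zᵀ * C) * (S + B * Fh)⁻¹
  set T := (1 + Zᵀ * Z)⁻¹
  constructor
  · simp only [hFS, smul_add, Matrix.smul_mul, smul_smul, hq, Matrix.mul_assoc]
    abel
  · rw [hFS, ← smul_add]
    congr 1
    calc _ = (Ah + Bh * Fh) * (S + B * Fh)⁻¹ + (Ah * S⁻¹ * B - Bh) * (T * D)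
          + Bh * ((1 + Zᵀ * Z) * T * D - D) := by
          simp only [D, Matrix.add_mul, Matrix.mul_add, Matrix.sub_mul, Matrix.mul_sub,
            Matrix.one_mul, Matrix.mul_assoc, hZC]
          abel
      _ = _ := by rw [hti, Matrix.one_mul, sub_self, Matrix.mul_zero, add_zero]

theorem output_sq_split (hA : IsUnit (A - γ • 1).det) (hF : IsUnit (A + B * Fh - γ • 1).det)
    (hZ : Z = C * (A - γ • 1)⁻¹ * B) :
    ((Fh - Zᵀ * C) * (A + B * Fh - γ • 1)⁻¹)ᵀ * (1 + Zᵀ * Z)⁻¹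
        * ((Fh - Zᵀ * C) * (A + B * Fh - γ • 1)⁻¹)
      + (A - γ • 1)⁻¹ᵀ * Cᵀ * (1 + Z * Zᵀ)⁻¹ * C * (A - γ • 1)⁻¹
      = (A + B * Fh - γ • 1)⁻¹ᵀ * (Cᵀ * C + Fhᵀ * Fh) * (A + B * Fh - γ • 1)⁻¹ := by
  set G := (A + B * Fh - γ • 1)⁻¹
  have hCS : C * (A - γ • 1)⁻¹ = (C + Z * Fh) * G := by
    calc _ = C * (A - γ • 1)⁻¹ * ((A - γ • 1 + B * Fh) * G) := by
          rw [show A - γ • 1 + B * Fh = A + B * Fh - γ • 1 by abel, mul_nonsing_inv _ hF,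
            Matrix.mul_one]
      _ = _ := by
        rw [hZ]
        simp only [Matrix.mul_add, Matrix.add_mul, Matrix.mul_assoc,
          nonsing_inv_mul_cancel_left _ _ hA]
  rw [add_comm, Matrix.mul_assoc (_ * Cᵀ * _) C, ← Matrix.transpose_mul, hCS,
    Matrix.add_mul, Matrix.sub_mul, Matrix.mul_assoc Z, Matrix.mul_assoc Zᵀ,
    transpose_mul_inv_mul_add_transpose_mul_inv_mul]
  simp only [Matrix.transpose_mul, Matrix.mul_add, Matrix.add_mul, Matrix.mul_assoc]

theorem sdare_of_scare [Fintype R] [DecidableEq R] {X Aγ Hγ : Matrix N N ℝ} {W : Matrix R R ℝ}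
    {K : Matrix (N ⊕ R) M ℝ} {G₀ Xd : Matrix (N ⊕ R) (N ⊕ R) ℝ} {E₀ : Matrix (N ⊕ R) N ℝ}
    (hX : Xᵀ = X) (hW : Wᵀ = W) (hP : IsUnit (1 + Bhᵀ * W * Bh))
    (hscare : Aᵀ * X + X * A + Cᵀ * C + Ahᵀ * W * Ah -
      (X * B + Ahᵀ * W * Bh) * (1 + Bhᵀ * W * Bh)⁻¹ * (Bᵀ * X + Bhᵀ * W * Ah) = 0)
    (hγ : 0 ≤ γ) (hAγ : Aγ = A - γ • 1) (hAγu : IsUnit Aγ)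
    (hFh : Fh = -((1 + Bhᵀ * W * Bh)⁻¹ * (X * B + Ahᵀ * W * Bh)ᵀ))
    (hAFu : IsUnit (A + B * Fh - γ • 1)) (hZ : Z = C * Aγ⁻¹ * B)
    (hHγ : Hγ = (2 * γ) • (Aγ⁻¹ᵀ * Cᵀ * (1 + Z * Zᵀ)⁻¹ * C * Aγ⁻¹))
    (hK : K = fromRows (√(2 * γ) • (Aγ⁻¹ * B)) (Ah * Aγ⁻¹ * B - Bh))
    (hG₀ : G₀ = K * (1 + Zᵀ * Z)⁻¹ * Kᵀ)
    (hE₀ : E₀ = fromRows (Aγ + (2 * γ) • 1 + B * Zᵀ * C)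
        (√(2 * γ) • (Ah + Bh * Zᵀ * C)) * (1 + Aγ⁻¹ * B * Zᵀ * C)⁻¹ * Aγ⁻¹)
    (hXd : Xd = fromBlocks X 0 0 W) (hinv2 : IsUnit (1 + G₀ * Xd)) :
    X = E₀ᵀ * Xd * (1 + G₀ * Xd)⁻¹ * E₀ + Hγ := by
  subst hAγ hK hG₀ hE₀ hXd hHγ
  rw [isUnit_iff_isUnit_det] at hP hAγu hAFu hinv2
  have hgain := feedback_add_eq_zero hX hW hP hFh
  have hcl := closedLoop_eq_zero hX hW hscare hFh
  have hKXE := transpose_mul_fromBlocks_mul_cayleyFactor hAγu hAFu hZ hgain hcl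
  have hsplit := output_sq_split hAγu hAFu hZ
  rw [fromRows_mul_inv_eq_cayleyFactor_add hγ hAγu hAFu hZ]
  set Ec := cayleyFactor γ (A + B * Fh) (Ah + Bh * Fh)
  set K := fromRows (√(2 * γ) • ((A - γ • 1)⁻¹ * B)) (Ah * (A - γ • 1)⁻¹ * B - Bh)
  set D := (Fh - Zᵀ * C) * (A + B * Fh - γ • 1)⁻¹
  set T := (1 + Zᵀ * Z)⁻¹
  have hfac :
      Ec + √(2 * γ) • (K * (T * D)) = (1 + K * T * Kᵀ * fromBlocks X 0 0 W) * Ec := by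
    rw [Matrix.add_mul, Matrix.one_mul, Matrix.mul_assoc (K * T * Kᵀ), Matrix.mul_assoc (K * T),
      ← Matrix.mul_assoc Kᵀ, hKXE, Matrix.mul_smul, Matrix.mul_assoc]
  have hcross :
      (√(2 * γ) • (K * (T * D)))ᵀ * fromBlocks X 0 0 W * Ec = (2 * γ) • (Dᵀ * T * D) := by
    have hT : Tᵀ = T := by
      rw [transpose_nonsing_inv, transpose_add, transpose_one, Matrix.transpose_mul,
        transpose_transpose]
    calc _ = √(2 * γ) • (Dᵀ * T * (Kᵀ * fromBlocks X 0 0 W * Ec)) := by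
          simp only [transpose_smul, Matrix.transpose_mul, hT, Matrix.smul_mul, Matrix.mul_assoc]
      _ = _ := by
        rw [hKXE, Matrix.mul_smul, smul_smul, Real.mul_self_sqrt (by positivity)]
  rw [hfac, Matrix.mul_assoc _ (1 + _)⁻¹, nonsing_inv_mul_cancel_left _ _ hinv2, ← hfac,
    transpose_add, Matrix.add_mul, Matrix.add_mul, hcross, add_assoc, ← smul_add, hsplit]
  exact (cayleyFactor_stein hγ hAFu (lyapunov_closedLoop hgain hcl)).symm

end Transformation

end Riccati

theorem stmt16_general {n m l r : ℕ}
    (A : Matrix (Fin n) (Fin n) ℝ)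
    (Ah : Matrix (Fin n × Fin (r - 1)) (Fin n) ℝ)
    (B : Matrix (Fin n) (Fin m) ℝ)
    (Bh : Matrix (Fin n × Fin (r - 1)) (Fin m) ℝ)
    (C : Matrix (Fin l) (Fin n) ℝ)
    (X : Matrix (Fin n) (Fin n) ℝ) (hX : Xᵀ = X)
    (hinv1 : IsUnit (1 + Bhᵀ * (X ⊗ₖ (1 : Matrix (Fin (r - 1)) (Fin (r - 1)) ℝ)) * Bh))
    (hscare : Aᵀ * X + X * A + Cᵀ * C +
        Ahᵀ * (X ⊗ₖ (1 : Matrix (Fin (r - 1)) (Fin (r - 1)) ℝ)) * Ah -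
        (X * B + Ahᵀ * (X ⊗ₖ (1 : Matrix (Fin (r - 1)) (Fin (r - 1)) ℝ)) * Bh) *
          (1 + Bhᵀ * (X ⊗ₖ (1 : Matrix (Fin (r - 1)) (Fin (r - 1)) ℝ)) * Bh)⁻¹ *
          (Bᵀ * X + Bhᵀ * (X ⊗ₖ (1 : Matrix (Fin (r - 1)) (Fin (r - 1)) ℝ)) * Ah) = 0)
    (γ : ℝ) (hγ : 0 < γ)
    (Aγ : Matrix (Fin n) (Fin n) ℝ) (hAγ : Aγ = A - γ • 1) (hAγu : IsUnit Aγ)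
    (Fh : Matrix (Fin m) (Fin n) ℝ)
    (hFh : Fh = -((1 + Bhᵀ * (X ⊗ₖ (1 : Matrix (Fin (r - 1)) (Fin (r - 1)) ℝ)) * Bh)⁻¹ *
        (X * B + Ahᵀ * (X ⊗ₖ (1 : Matrix (Fin (r - 1)) (Fin (r - 1)) ℝ)) * Bh)ᵀ))
    (hAFu : IsUnit (A + B * Fh - γ • 1))
    (Z : Matrix (Fin l) (Fin m) ℝ) (hZ : Z = C * Aγ⁻¹ * B)
    (Hγ : Matrix (Fin n) (Fin n) ℝ)
    (hHγ : Hγ = (2 * γ) • (Aγ⁻¹ᵀ * Cᵀ * (1 + Z * Zᵀ)⁻¹ * C * Aγ⁻¹))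
    (K : Matrix (Fin n ⊕ Fin n × Fin (r - 1)) (Fin m) ℝ)
    (hK : K = Matrix.fromRows (Real.sqrt (2 * γ) • (Aγ⁻¹ * B)) (Ah * Aγ⁻¹ * B - Bh))
    (G₀ : Matrix (Fin n ⊕ Fin n × Fin (r - 1)) (Fin n ⊕ Fin n × Fin (r - 1)) ℝ)
    (hG₀ : G₀ = K * (1 + Zᵀ * Z)⁻¹ * Kᵀ)
    (E₀ : Matrix (Fin n ⊕ Fin n × Fin (r - 1)) (Fin n) ℝ)
    (hE₀ : E₀ = Matrix.fromRows (Aγ + (2 * γ) • 1 + B * Zᵀ * C)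
        (Real.sqrt (2 * γ) • (Ah + Bh * Zᵀ * C)) * (1 + Aγ⁻¹ * B * Zᵀ * C)⁻¹ * Aγ⁻¹)
    (Xd : Matrix (Fin n ⊕ Fin n × Fin (r - 1)) (Fin n ⊕ Fin n × Fin (r - 1)) ℝ)
    (hXd : Xd = Matrix.fromBlocks X 0 0
        (X ⊗ₖ (1 : Matrix (Fin (r - 1)) (Fin (r - 1)) ℝ)))
    (hinv2 : IsUnit (1 + G₀ * Xd)) :
    X = E₀ᵀ * Xd * (1 + G₀ * Xd)⁻¹ * E₀ + Hγ := by
  have hW : (X ⊗ₖ (1 : Matrix (Fin (r - 1)) (Fin (r - 1)) ℝ))ᵀ = X ⊗ₖ 1 := by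
    rw [← kroneckerMap_transpose, hX, transpose_one]
  exact Riccati.sdare_of_scare hX hW hinv1 hscare hγ.le hAγ hAγu hFh hAFu hZ hHγ hK hG₀ hE₀
    hXd hinv2

/-- The SCARE is transformed, by the Cayley/Möbius transformation with parameter γ,
into an SDARE: a symmetric solution X of the SCARE satisfies
X = E₀ᵀ X_d (I + G₀ X_d)⁻¹ E₀ + H_γ, where X_d = diag(X, X ⊗ I_{r−1}).
Here `(r−1)n` is realized as `Fin n × Fin (r-1)`. -/
theorem stmt16 {n m l r : ℕ} (hn : 0 < n) (hm : 0 < m) (hl : 0 < l) (hr : 2 ≤ r)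
    (A : Matrix (Fin n) (Fin n) ℝ)
    (Ah : Matrix (Fin n × Fin (r - 1)) (Fin n) ℝ)
    (B : Matrix (Fin n) (Fin m) ℝ)
    (Bh : Matrix (Fin n × Fin (r - 1)) (Fin m) ℝ)
    (C : Matrix (Fin l) (Fin n) ℝ)
    (X : Matrix (Fin n) (Fin n) ℝ) (hX : Xᵀ = X)
    (hinv1 : IsUnit (1 + Bhᵀ * (X ⊗ₖ (1 : Matrix (Fin (r - 1)) (Fin (r - 1)) ℝ)) * Bh))
    (hscare : Aᵀ * X + X * A + Cᵀ * C +
        Ahᵀ * (X ⊗ₖ (1 : Matrix (Fin (r - 1)) (Fin (r - 1)) ℝ)) * Ah -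
        (X * B + Ahᵀ * (X ⊗ₖ (1 : Matrix (Fin (r - 1)) (Fin (r - 1)) ℝ)) * Bh) *
          (1 + Bhᵀ * (X ⊗ₖ (1 : Matrix (Fin (r - 1)) (Fin (r - 1)) ℝ)) * Bh)⁻¹ *
          (Bᵀ * X + Bhᵀ * (X ⊗ₖ (1 : Matrix (Fin (r - 1)) (Fin (r - 1)) ℝ)) * Ah) = 0)
    (γ : ℝ) (hγ : 0 < γ)
    (Aγ : Matrix (Fin n) (Fin n) ℝ) (hAγ : Aγ = A - γ • 1) (hAγu : IsUnit Aγ)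
    (Fh : Matrix (Fin m) (Fin n) ℝ)
    (hFh : Fh = -((1 + Bhᵀ * (X ⊗ₖ (1 : Matrix (Fin (r - 1)) (Fin (r - 1)) ℝ)) * Bh)⁻¹ *
        (X * B + Ahᵀ * (X ⊗ₖ (1 : Matrix (Fin (r - 1)) (Fin (r - 1)) ℝ)) * Bh)ᵀ))
    (hAFu : IsUnit (A + B * Fh - γ • 1))
    (Z : Matrix (Fin l) (Fin m) ℝ) (hZ : Z = C * Aγ⁻¹ * B)
    (Hγ : Matrix (Fin n) (Fin n) ℝ)
    (hHγ : Hγ = (2 * γ) • (Aγ⁻¹ᵀ * Cᵀ * (1 + Z * Zᵀ)⁻¹ * C * Aγ⁻¹))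
    (K : Matrix (Fin n ⊕ Fin n × Fin (r - 1)) (Fin m) ℝ)
    (hK : K = Matrix.fromRows (Real.sqrt (2 * γ) • (Aγ⁻¹ * B)) (Ah * Aγ⁻¹ * B - Bh))
    (G₀ : Matrix (Fin n ⊕ Fin n × Fin (r - 1)) (Fin n ⊕ Fin n × Fin (r - 1)) ℝ)
    (hG₀ : G₀ = K * (1 + Zᵀ * Z)⁻¹ * Kᵀ)
    (E₀ : Matrix (Fin n ⊕ Fin n × Fin (r - 1)) (Fin n) ℝ)
    (hE₀ : E₀ = Matrix.fromRows (Aγ + (2 * γ) • 1 + B * Zᵀ * C)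
        (Real.sqrt (2 * γ) • (Ah + Bh * Zᵀ * C)) * (1 + Aγ⁻¹ * B * Zᵀ * C)⁻¹ * Aγ⁻¹)
    (Xd : Matrix (Fin n ⊕ Fin n × Fin (r - 1)) (Fin n ⊕ Fin n × Fin (r - 1)) ℝ)
    (hXd : Xd = Matrix.fromBlocks X 0 0
        (X ⊗ₖ (1 : Matrix (Fin (r - 1)) (Fin (r - 1)) ℝ)))
    (hinv2 : IsUnit (1 + G₀ * Xd)) :
    X = E₀ᵀ * Xd * (1 + G₀ * Xd)⁻¹ * E₀ + Hγ :=
  stmt16_general A Ah B Bh C X hX hinv1 hscare γ hγ Aγ hAγ hAγu Fh hFh hAFu Z hZ Hγ hHγ K hK G₀ hG₀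
    E₀ hE₀ Xd hXd hinv2
end

section
/- Let γ > 0, let A_F ∈ ℝ^{n×n} with A_F − γI_n invertible, let Â_F ∈ ℝ^{(r−1)n×n}, and let S ∈ ℝ^{n×n} be symmetric positive definite satisfying the Lyapunov-type strict inequality A_FᵀS + SA_F + Â_Fᵀ(S ⊗ I_{r−1})Â_F ≺ 0. Then, with K = (A_F + γI_n)(A_F − γI_n)⁻¹ and N = Â_F(A_F − γI_n)⁻¹, the Stein-type strict inequality KᵀSK + 2γ Nᵀ(S ⊗ I_{r−1})N ≺ S holds (the Cayley transform maps stochastic continuous-time stability inequalities to stochastic discrete-time ones). -/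
/-!
With `M = A - γI`, `P = A + γI` one has `MᵀSM - PᵀSP = -2γ(AᵀS + SA)`, so after writing
`S = M⁻ᵀ (MᵀSM) M⁻¹` the Stein defect `S - KᵀSK - 2γ NᵀŜN` becomes the congruence
`2γ M⁻ᵀ L M⁻¹` of the negated Lyapunov expression `L`; congruence by an invertible matrix
and scaling by `2γ > 0` preserve positive definiteness.
-/

open Matrix
open scoped Kronecker

namespace Matrix

variable {R : Type*} [CommRing R] {m p : Type*} [Fintype m] [DecidableEq m] [Fintype p]

theorem transpose_mul_mul_sub_add_smul_one (A S : Matrix m m R) (γ : R) :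
    (A - γ • 1)ᵀ * S * (A - γ • 1) - (A + γ • 1)ᵀ * S * (A + γ • 1) =
      -((2 * γ) • (Aᵀ * S + S * A)) := by
  simp only [transpose_sub, transpose_add, transpose_smul, transpose_one, sub_mul, mul_sub,
    add_mul, mul_add, Matrix.smul_mul, Matrix.mul_smul, Matrix.one_mul, Matrix.mul_one]
  module

theorem transpose_mul_mul_mul_inv {n : Type*} [Fintype n] (X : Matrix n m R) (Y : Matrix n n R)
    (M : Matrix m m R) : (X * M⁻¹)ᵀ * Y * (X * M⁻¹) = (M⁻¹)ᵀ * (Xᵀ * Y * X) * M⁻¹ := by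
  simp only [transpose_mul, Matrix.mul_assoc]

theorem cayley_stein_eq_congr_lyapunov (A S : Matrix m m R) (Ah : Matrix p m R)
    (Sh : Matrix p p R) (γ : R) (hM : IsUnit (A - γ • 1)) :
    S - (((A + γ • 1) * (A - γ • 1)⁻¹)ᵀ * S * ((A + γ • 1) * (A - γ • 1)⁻¹) +
        (2 * γ) • ((Ah * (A - γ • 1)⁻¹)ᵀ * Sh * (Ah * (A - γ • 1)⁻¹))) =
      (2 * γ) • (((A - γ • 1)⁻¹)ᵀ * -(Aᵀ * S + S * A + Ahᵀ * Sh * Ah) * (A - γ • 1)⁻¹) := by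
  set M := A - γ • 1
  have hS : S = (M⁻¹)ᵀ * (Mᵀ * S * M) * M⁻¹ := by
    rw [← transpose_mul_mul_mul_inv, mul_nonsing_inv M ((isUnit_iff_isUnit_det M).mp hM),
      transpose_one, Matrix.one_mul, Matrix.mul_one]
  have hL : Mᵀ * S * M - ((A + γ • 1)ᵀ * S * (A + γ • 1) + (2 * γ) • (Ahᵀ * Sh * Ah)) =
      (2 * γ) • -(Aᵀ * S + S * A + Ahᵀ * Sh * Ah) := by
    rw [← sub_sub, transpose_mul_mul_sub_add_smul_one]
    module
  nth_rewrite 1 [hS]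
  rw [transpose_mul_mul_mul_inv, transpose_mul_mul_mul_inv, ← Matrix.smul_mul,
    ← Matrix.mul_smul, ← Matrix.add_mul, ← Matrix.mul_add, ← Matrix.sub_mul, ← Matrix.mul_sub,
    hL, Matrix.mul_smul, Matrix.smul_mul]

end Matrix

theorem stmt17_general {n r : ℕ}
    (γ : ℝ) (hγ : 0 < γ)
    (AF : Matrix (Fin n) (Fin n) ℝ)
    (hAFu : IsUnit (AF - γ • 1))
    (AhF : Matrix (Fin n × Fin (r - 1)) (Fin n) ℝ)
    (S : Matrix (Fin n) (Fin n) ℝ)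
    (hLyap : (-(AFᵀ * S + S * AF +
        AhFᵀ * (S ⊗ₖ (1 : Matrix (Fin (r - 1)) (Fin (r - 1)) ℝ)) * AhF)).PosDef)
    (K : Matrix (Fin n) (Fin n) ℝ) (hK : K = (AF + γ • 1) * (AF - γ • 1)⁻¹)
    (N : Matrix (Fin n × Fin (r - 1)) (Fin n) ℝ) (hN : N = AhF * (AF - γ • 1)⁻¹) :
    (S - (Kᵀ * S * K + (2 * γ) •
        (Nᵀ * (S ⊗ₖ (1 : Matrix (Fin (r - 1)) (Fin (r - 1)) ℝ)) * N))).PosDef := by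
  rw [hK, hN, cayley_stein_eq_congr_lyapunov _ _ _ _ _ hAFu]
  have hinj := mulVec_injective_of_isUnit (isUnit_nonsing_inv_iff.mpr hAFu)
  have hcongr := hLyap.conjTranspose_mul_mul_same hinj
  rw [conjTranspose_eq_transpose_of_trivial] at hcongr
  exact hcongr.smul (by positivity)

/-- The Cayley transform maps stochastic continuous-time stability inequalities to
stochastic discrete-time ones: if A_Fᵀ S + S A_F + Â_Fᵀ (S ⊗ I_{r−1}) Â_F ≺ 0 with
S ≻ 0, then Kᵀ S K + 2γ Nᵀ (S ⊗ I_{r−1}) N ≺ S, where K = (A_F + γI)(A_F − γI)⁻¹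
and N = Â_F (A_F − γI)⁻¹.  Here `(r−1)n` is realized as `Fin n × Fin (r-1)`. -/
theorem stmt17 {n r : ℕ} (hn : 0 < n) (hr : 2 ≤ r)
    (γ : ℝ) (hγ : 0 < γ)
    (AF : Matrix (Fin n) (Fin n) ℝ)
    (hAFu : IsUnit (AF - γ • 1))
    (AhF : Matrix (Fin n × Fin (r - 1)) (Fin n) ℝ)
    (S : Matrix (Fin n) (Fin n) ℝ) (hS : S.PosDef)
    (hLyap : (-(AFᵀ * S + S * AF +
        AhFᵀ * (S ⊗ₖ (1 : Matrix (Fin (r - 1)) (Fin (r - 1)) ℝ)) * AhF)).PosDef)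
    (K : Matrix (Fin n) (Fin n) ℝ) (hK : K = (AF + γ • 1) * (AF - γ • 1)⁻¹)
    (N : Matrix (Fin n × Fin (r - 1)) (Fin n) ℝ) (hN : N = AhF * (AF - γ • 1)⁻¹) :
    (S - (Kᵀ * S * K + (2 * γ) •
        (Nᵀ * (S ⊗ₖ (1 : Matrix (Fin (r - 1)) (Fin (r - 1)) ℝ)) * N))).PosDef :=
  stmt17_general γ hγ AF hAFu AhF S hLyap K hK N hN
end

section
/- Let X ∈ ℝ^{n×n} be symmetric. Assume R is invertible and R + B̃ᵀ(I_r ⊗ X)B̃ is invertible, and set F = −(B̃ᵀ(I_r ⊗ X)B̃ + R)⁻¹(Ãᵀ(I_r ⊗ X)B̃ + L)ᵀ. Then the matrix I_{rn} + B̃R⁻¹B̃ᵀ(I_r ⊗ X) is invertible and the closed-loop matrix satisfies Ã + B̃F = (I_{rn} + B̃R⁻¹B̃ᵀ(I_r ⊗ X))⁻¹(Ã − B̃R⁻¹Lᵀ). -/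
open Matrix
open scoped Kronecker

/-- Closed-loop matrix identity: with F = −(B̃ᵀ(I_r ⊗ X)B̃ + R)⁻¹(Ãᵀ(I_r ⊗ X)B̃ + L)ᵀ,
the matrix I + B̃R⁻¹B̃ᵀ(I_r ⊗ X) is invertible and
Ã + B̃F = (I + B̃R⁻¹B̃ᵀ(I_r ⊗ X))⁻¹(Ã − B̃R⁻¹Lᵀ).
Here `rn` is realized as the index type `Fin r × Fin n`. -/
theorem stmt18 {n m r : ℕ} (hn : 0 < n) (hm : 0 < m) (hr : 0 < r)
    (At : Matrix (Fin r × Fin n) (Fin n) ℝ)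
    (Bt : Matrix (Fin r × Fin n) (Fin m) ℝ)
    (L : Matrix (Fin n) (Fin m) ℝ)
    (R : Matrix (Fin m) (Fin m) ℝ)
    (X : Matrix (Fin n) (Fin n) ℝ) (hX : Xᵀ = X)
    (hR : IsUnit R)
    (hRX : IsUnit (R + Btᵀ * ((1 : Matrix (Fin r) (Fin r) ℝ) ⊗ₖ X) * Bt))
    (F : Matrix (Fin m) (Fin n) ℝ)
    (hF : F = -((Btᵀ * ((1 : Matrix (Fin r) (Fin r) ℝ) ⊗ₖ X) * Bt + R)⁻¹ *
        (Atᵀ * ((1 : Matrix (Fin r) (Fin r) ℝ) ⊗ₖ X) * Bt + L)ᵀ)) :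
    IsUnit (1 + Bt * R⁻¹ * Btᵀ * ((1 : Matrix (Fin r) (Fin r) ℝ) ⊗ₖ X)) ∧
    At + Bt * F = (1 + Bt * R⁻¹ * Btᵀ * ((1 : Matrix (Fin r) (Fin r) ℝ) ⊗ₖ X))⁻¹ *
      (At - Bt * R⁻¹ * Lᵀ) := by
  set K : Matrix (Fin r × Fin n) (Fin r × Fin n) ℝ :=
    (1 : Matrix (Fin r) (Fin r) ℝ) ⊗ₖ X with hKdef
  have hK : Kᵀ = K := by
    rw [hKdef, ← kroneckerMap_transpose, transpose_one, hX]
  set S : Matrix (Fin m) (Fin m) ℝ := Btᵀ * K * Bt + R with hSdef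
  have hS : IsUnit S := by rwa [hSdef, add_comm]
  have hSdet : IsUnit S.det := (Matrix.isUnit_iff_isUnit_det S).mp hS
  have hRdet : IsUnit R.det := (Matrix.isUnit_iff_isUnit_det R).mp hR
  have hSS : S * S⁻¹ = 1 := Matrix.mul_nonsing_inv S hSdet
  have hRR : R * R⁻¹ = 1 := Matrix.mul_nonsing_inv R hRdet
  have hRR' : R⁻¹ * R = 1 := Matrix.nonsing_inv_mul R hRdet
  set M : Matrix (Fin r × Fin n) (Fin r × Fin n) ℝ :=
    1 + Bt * R⁻¹ * Btᵀ * K with hMdef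
  -- F in convenient form
  have hF' : F = -(S⁻¹ * (Btᵀ * K * At + Lᵀ)) := by
    rw [hF, hSdef]
    congr 2
    rw [Matrix.transpose_add, Matrix.transpose_mul, Matrix.transpose_mul,
      Matrix.transpose_transpose, hK, Matrix.mul_assoc]
  -- invertibility of M
  have hMunit : IsUnit M := by
    rw [Matrix.isUnit_iff_isUnit_det, hMdef]
    have h1 : (1 + Bt * R⁻¹ * Btᵀ * K).det = (1 + (Btᵀ * K) * (Bt * R⁻¹)).det := by
      rw [show Bt * R⁻¹ * Btᵀ * K = (Bt * R⁻¹) * (Btᵀ * K) by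
        simp [Matrix.mul_assoc], Matrix.det_one_add_mul_comm]
    have h2 : 1 + Btᵀ * K * (Bt * R⁻¹) = S * R⁻¹ := by
      rw [hSdef, Matrix.add_mul, ← Matrix.mul_assoc, hRR, add_comm]
    rw [h1, h2, ← Matrix.isUnit_iff_isUnit_det]
    exact hS.mul (Matrix.isUnit_nonsing_inv_iff.mpr hR)
  refine ⟨hMunit, ?_⟩
  have hMdet : IsUnit M.det := (Matrix.isUnit_iff_isUnit_det M).mp hMunit
  have hMM : M⁻¹ * M = 1 := Matrix.nonsing_inv_mul M hMdet
  -- key identity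
  have e1 : ∀ Y : Matrix (Fin m) (Fin n) ℝ, S * (S⁻¹ * Y) = Y := fun Y => by
    rw [← Matrix.mul_assoc, hSS, Matrix.one_mul]
  have e2 : ∀ Y : Matrix (Fin m) (Fin n) ℝ, R⁻¹ * (R * Y) = Y := fun Y => by
    rw [← Matrix.mul_assoc, hRR', Matrix.one_mul]
  have e3 : ∀ Y : Matrix (Fin m) (Fin n) ℝ,
      Btᵀ * (K * (Bt * Y)) = S * Y - R * Y := fun Y => by
    rw [← Matrix.sub_mul, hSdef, add_sub_cancel_right]
    simp [Matrix.mul_assoc]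
  have key : M * (At + Bt * F) = At - Bt * R⁻¹ * Lᵀ := by
    rw [hF', hMdef]
    simp only [Matrix.mul_add, Matrix.add_mul, Matrix.one_mul, Matrix.mul_neg,
      Matrix.neg_mul, Matrix.mul_assoc, e3, e1, e2, Matrix.mul_sub, Matrix.sub_mul]
    abel
  calc At + Bt * F = M⁻¹ * (M * (At + Bt * F)) := by
        rw [← Matrix.mul_assoc, hMM, Matrix.one_mul]
    _ = M⁻¹ * (At - Bt * R⁻¹ * Lᵀ) := by rw [key]
end
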